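/- arXiv:1910.08454 — 6 statements merged into one kernel-verified Lean document; each statement's English description precedes it below -/
import Mathlib

section
/- A finite simple graph H with at least one edge is weakly norming if and only if t_H is a convex function on the set of graphons, i.e., for all graphons W_1, W_2 and all λ ∈ [0,1], t_H(λW_1 + (1−λ)W_2) ≤ λ t_H(W_1) + (1−λ) t_H(W_2). -/
/-!
On the cone of nonnegative bounded symmetric kernels, `t_H` is nonnegative and homogeneous of
degree `e = e(H)`. Weak norming is subadditivity of `t_H^{1/e}` on this cone, since
`t_H(|U + W|) ≤ t_H(|U| + |W|)`; convexity on graphons is convexity on the cone, since any two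
kernels of the cone are a common multiple of two graphons. For a nonnegative `e`-homogeneous
function on a cone these are equivalent: if `t x ≤ aᵉ` and `t y ≤ bᵉ`, convexity applied to the
combination `x + y = (a + b) • ((a / (a + b)) • a⁻¹ • x + (b / (a + b)) • b⁻¹ • y)` gives
`t (x + y) ≤ (a + b)ᵉ`; conversely subadditivity and the convexity of `s ↦ sᵉ` give convexity.
-/

open MeasureTheory

/-- A linear order on `Fin a × Fin b` (lexicographic), used to enumerate each edge once. -/
instance finProdLinearOrder {a b : ℕ} : LinearOrder (Fin a × Fin b) :=
  LinearOrder.lift' (toLex : Fin a × Fin b → Fin a ×ₗ Fin b) toLex.injective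

/-- The homomorphism density `t_H(W)` of a two-variable kernel `W` in a graph `H`. -/
noncomputable def homDensity {V : Type} [Fintype V] [LinearOrder V]
    (H : SimpleGraph V) [DecidableRel H.Adj] (W : ℝ → ℝ → ℝ) : ℝ :=
  ∫ x in (Set.univ.pi fun _ : V => Set.Icc (0 : ℝ) 1),
    ∏ p ∈ Finset.univ.filter (fun p : V × V => p.1 < p.2 ∧ H.Adj p.1 p.2),
      W (x p.1) (x p.2)

/-- The number of edges `e(H)` of `H`, enumerated as ordered pairs `(u,v)` with `u < v`. -/
def edgeCount {V : Type} [Fintype V] [LinearOrder V]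
    (H : SimpleGraph V) [DecidableRel H.Adj] : ℕ :=
  (Finset.univ.filter (fun p : V × V => p.1 < p.2 ∧ H.Adj p.1 p.2)).card

/-- Membership in `𝒲`: bounded symmetric measurable functions `[0,1]² → ℝ`
(defined on all of `ℝ²`). -/
def IsKernel (W : ℝ → ℝ → ℝ) : Prop :=
  Measurable (Function.uncurry W) ∧ (∀ x y, W x y = W y x) ∧ ∃ C : ℝ, ∀ x y, |W x y| ≤ C

/-- A graphon: symmetric measurable with values in `[0,1]`. -/
def IsGraphon (W : ℝ → ℝ → ℝ) : Prop :=
  Measurable (Function.uncurry W) ∧ (∀ x y, W x y = W y x) ∧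
    ∀ x y, W x y ∈ Set.Icc (0 : ℝ) 1

/-- A signed graphon: symmetric measurable with values in `[-1,1]`. -/
def IsSignedGraphon (W : ℝ → ℝ → ℝ) : Prop :=
  Measurable (Function.uncurry W) ∧ (∀ x y, W x y = W y x) ∧
    ∀ x y, W x y ∈ Set.Icc (-1 : ℝ) 1

/-- `H` is weakly norming: `W ↦ t_H(|W|)^{1/e(H)}` satisfies the triangle inequality on `𝒲`. -/
def WeaklyNorming {V : Type} [Fintype V] [LinearOrder V]
    (H : SimpleGraph V) [DecidableRel H.Adj] : Prop :=
  ∀ U W : ℝ → ℝ → ℝ, IsKernel U → IsKernel W →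
    homDensity H (fun x y => |U x y + W x y|) ^ ((edgeCount H : ℝ)⁻¹) ≤
      homDensity H (fun x y => |U x y|) ^ ((edgeCount H : ℝ)⁻¹) +
        homDensity H (fun x y => |W x y|) ^ ((edgeCount H : ℝ)⁻¹)

/-- `H` is norming: `W ↦ |t_H(W)|^{1/e(H)}` satisfies the triangle inequality on `𝒲`
and vanishes only at a.e.-zero functions. -/
def Norming {V : Type} [Fintype V] [LinearOrder V]
    (H : SimpleGraph V) [DecidableRel H.Adj] : Prop :=
  (∀ U W : ℝ → ℝ → ℝ, IsKernel U → IsKernel W →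
      |homDensity H (fun x y => U x y + W x y)| ^ ((edgeCount H : ℝ)⁻¹) ≤
        |homDensity H U| ^ ((edgeCount H : ℝ)⁻¹) +
          |homDensity H W| ^ ((edgeCount H : ℝ)⁻¹)) ∧
  (∀ W : ℝ → ℝ → ℝ, IsKernel W → homDensity H W = 0 →
      (∀ᵐ p : ℝ × ℝ ∂(volume.restrict (Set.Icc (0:ℝ) 1 ×ˢ Set.Icc (0:ℝ) 1)),
        W p.1 p.2 = 0))

/-- The polynomial `P_{H,n}(A) = Σ_{φ : V(H) → [n]} Π_{uv ∈ E(H)} a_{φ(u)φ(v)}`. -/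
noncomputable def graphPoly {V : Type} [Fintype V] [LinearOrder V]
    (H : SimpleGraph V) [DecidableRel H.Adj] {n : ℕ} (A : Matrix (Fin n) (Fin n) ℝ) : ℝ :=
  ∑ φ : V → Fin n,
    ∏ p ∈ Finset.univ.filter (fun p : V × V => p.1 < p.2 ∧ H.Adj p.1 p.2),
      A (φ p.1) (φ p.2)

/-- The graph `C_k^⋈` on `{1,…,k} × {1,2}`: `(u,i)` adjacent to `(v,j)` iff `i ≠ j` and
`u - v ∈ {-1,0,1} (mod k)`. -/
def cycleBowtie (k : ℕ) : SimpleGraph (Fin k × Fin 2) where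
  Adj p q := p.2 ≠ q.2 ∧
    (p.1 = q.1 ∨ ((p.1 : ℕ) + 1) % k = (q.1 : ℕ) ∨ ((q.1 : ℕ) + 1) % k = (p.1 : ℕ))
  symm := by
    constructor
    rintro p q ⟨h1, h2⟩
    refine ⟨h1.symm, ?_⟩
    rcases h2 with h | h | h
    · exact Or.inl h.symm
    · exact Or.inr (Or.inr h)
    · exact Or.inr (Or.inl h)
  loopless := by constructor; rintro p ⟨h1, -⟩; exact h1 rfl

noncomputable instance (k : ℕ) : DecidableRel (cycleBowtie k).Adj :=
  fun _ _ => Classical.dec _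

/-- `K_{t,t}` minus a perfect matching, on vertex set `Fin t × Fin 2`:
`(i,0)` is adjacent to `(j,1)` iff `i ≠ j`. -/
def kttMinusPM (t : ℕ) : SimpleGraph (Fin t × Fin 2) where
  Adj p q := p.2 ≠ q.2 ∧ p.1 ≠ q.1
  symm := by constructor; rintro p q ⟨h1, h2⟩; exact ⟨h1.symm, h2.symm⟩
  loopless := by constructor; rintro p ⟨h1, -⟩; exact h1 rfl

noncomputable instance (t : ℕ) : DecidableRel (kttMinusPM t).Adj :=
  fun _ _ => Classical.dec _

/-- The Möbius ladder `K_{5,5} \ C_{10}` on `Fin 5 × Fin 2`, with parts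
`a_i = (i,0)`, `b_j = (j,1)`; `a_i ~ b_j` iff `j ∉ {i, i+1} (mod 5)`. -/
def mobius : SimpleGraph (Fin 5 × Fin 2) where
  Adj p q := p.2 ≠ q.2 ∧
    ((p.2 = 0 ∧ (q.1 : ℕ) ≠ (p.1 : ℕ) ∧ (q.1 : ℕ) ≠ ((p.1 : ℕ) + 1) % 5) ∨
     (q.2 = 0 ∧ (p.1 : ℕ) ≠ (q.1 : ℕ) ∧ (p.1 : ℕ) ≠ ((q.1 : ℕ) + 1) % 5))
  symm := by constructor; rintro p q ⟨h1, h2⟩; exact ⟨h1.symm, h2.symm⟩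
  loopless := by constructor; rintro p ⟨h1, -⟩; exact h1 rfl

noncomputable instance : DecidableRel mobius.Adj := fun _ _ => Classical.dec _

/-- The block matrix `[[J_n, -J_n], [-J_n, J_n]]`. -/
def blockMat (n : ℕ) : Matrix (Fin (2*n)) (Fin (2*n)) ℝ :=
  Matrix.of fun i j => if (((i : ℕ) < n) ↔ ((j : ℕ) < n)) then 1 else -1

/-- The `m × m` all-ones matrix `J_m`. -/
def onesMat (m : ℕ) : Matrix (Fin m) (Fin m) ℝ := Matrix.of fun _ _ => 1

/-- The step function `U_A` associated to an `n × n` matrix `A`. -/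
noncomputable def stepFn (n : ℕ) (A : Matrix (Fin n) (Fin n) ℝ) : ℝ → ℝ → ℝ := fun x y =>
  if h : 0 < n ∧ x ∈ Set.Ico (0 : ℝ) 1 ∧ y ∈ Set.Ico (0 : ℝ) 1 then
    A ⟨⌊n * x⌋₊ % n, Nat.mod_lt _ h.1⟩ ⟨⌊n * y⌋₊ % n, Nat.mod_lt _ h.1⟩
  else 0

/-- The cut norm `‖W‖_□ = sup_{S,T ⊆ [0,1]} |∫_{S×T} W|`. -/
noncomputable def cutNorm (W : ℝ → ℝ → ℝ) : ℝ :=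
  sSup { r : ℝ | ∃ S T : Set ℝ, MeasurableSet S ∧ MeasurableSet T ∧
    S ⊆ Set.Icc 0 1 ∧ T ⊆ Set.Icc 0 1 ∧
    r = |∫ p in S ×ˢ T, W p.1 p.2| }

section HomogeneousConvex

variable {E : Type*} [AddCommGroup E] [Module ℝ E] {K : PointedCone ℝ E} {t : E → ℝ} {n : ℕ}

theorem rpow_inv_smul_of_homogeneous (hn : n ≠ 0) (h0 : ∀ x ∈ K, 0 ≤ t x)
    (hhom : ∀ c : ℝ, 0 ≤ c → ∀ x ∈ K, t (c • x) = c ^ n * t x) {c : ℝ} (hc : 0 ≤ c)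
    {x : E} (hx : x ∈ K) : t (c • x) ^ (n : ℝ)⁻¹ = c * t x ^ (n : ℝ)⁻¹ := by
  rw [hhom c hc x hx, Real.mul_rpow (pow_nonneg hc n) (h0 x hx),
    Real.pow_rpow_inv_natCast hc hn]

theorem ConvexOn.le_add_pow_of_homogeneous (ht : ConvexOn ℝ K t)
    (hhom : ∀ c : ℝ, 0 ≤ c → ∀ x ∈ K, t (c • x) = c ^ n * t x) {x y : E} (hx : x ∈ K)
    (hy : y ∈ K) {a b : ℝ} (ha : 0 < a) (hb : 0 < b) (hxa : t x ≤ a ^ n) (hyb : t y ≤ b ^ n) :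
    t (x + y) ≤ (a + b) ^ n := by
  have hab : 0 < a + b := add_pos ha hb
  have hx' : a⁻¹ • x ∈ K := K.smul_mem (inv_nonneg.2 ha.le) hx
  have hy' : b⁻¹ • y ∈ K := K.smul_mem (inv_nonneg.2 hb.le) hy
  -- `x + y` is `a + b` times a convex combination of the normalised vectors `x / a` and `y / b`.
  have hsum : x + y = (a + b) • ((a / (a + b)) • a⁻¹ • x + (b / (a + b)) • b⁻¹ • y) := by
    have hxc : (a + b) * (a / (a + b)) * a⁻¹ = 1 := by field_simp
    have hyc : (a + b) * (b / (a + b)) * b⁻¹ = 1 := by field_simp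
    rw [smul_add, smul_smul, smul_smul, smul_smul, smul_smul, hxc, hyc, one_smul, one_smul]
  have hxn : t (a⁻¹ • x) ≤ 1 := by
    rw [hhom _ (inv_nonneg.2 ha.le) x hx, inv_pow]
    exact inv_mul_le_one_of_le₀ hxa (by positivity)
  have hyn : t (b⁻¹ • y) ≤ 1 := by
    rw [hhom _ (inv_nonneg.2 hb.le) y hy, inv_pow]
    exact inv_mul_le_one_of_le₀ hyb (by positivity)
  have hcomb : t ((a / (a + b)) • a⁻¹ • x + (b / (a + b)) • b⁻¹ • y) ≤ 1 := by
    refine (ht.2 hx' hy' (by positivity) (by positivity) (by field_simp)).trans ?_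
    simp only [smul_eq_mul]
    calc a / (a + b) * t (a⁻¹ • x) + b / (a + b) * t (b⁻¹ • y)
        ≤ a / (a + b) * 1 + b / (a + b) * 1 := by gcongr
      _ = 1 := by field_simp
  rw [hsum, hhom _ hab.le _ (K.convex hx' hy' (by positivity) (by positivity) (by field_simp))]
  exact mul_le_of_le_one_right (by positivity) hcomb

theorem convexOn_iff_rpow_inv_add_le_of_homogeneous (hn : n ≠ 0) (h0 : ∀ x ∈ K, 0 ≤ t x)
    (hhom : ∀ c : ℝ, 0 ≤ c → ∀ x ∈ K, t (c • x) = c ^ n * t x) :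
    ConvexOn ℝ K t ↔
      ∀ x ∈ K, ∀ y ∈ K, t (x + y) ^ (n : ℝ)⁻¹ ≤ t x ^ (n : ℝ)⁻¹ + t y ^ (n : ℝ)⁻¹ := by
  constructor
  · intro ht x hx y hy
    refine le_of_forall_pos_le_add fun ε hε => ?_
    have hx0 : 0 ≤ t x ^ (n : ℝ)⁻¹ := Real.rpow_nonneg (h0 x hx) _
    have hy0 : 0 ≤ t y ^ (n : ℝ)⁻¹ := Real.rpow_nonneg (h0 y hy) _
    set a := t x ^ (n : ℝ)⁻¹ + ε / 2
    set b := t y ^ (n : ℝ)⁻¹ + ε / 2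
    have hxa : t x ≤ a ^ n := by
      calc t x = (t x ^ (n : ℝ)⁻¹) ^ n := (Real.rpow_inv_natCast_pow (h0 x hx) hn).symm
        _ ≤ a ^ n := by gcongr; exact le_add_of_nonneg_right (half_pos hε).le
    have hyb : t y ≤ b ^ n := by
      calc t y = (t y ^ (n : ℝ)⁻¹) ^ n := (Real.rpow_inv_natCast_pow (h0 y hy) hn).symm
        _ ≤ b ^ n := by gcongr; exact le_add_of_nonneg_right (half_pos hε).le
    have ha : 0 < a := by positivity
    have hb : 0 < b := by positivity
    calc t (x + y) ^ (n : ℝ)⁻¹ ≤ ((a + b) ^ n) ^ (n : ℝ)⁻¹ := by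
          gcongr
          · exact h0 _ (K.add_mem hx hy)
          · exact ht.le_add_pow_of_homogeneous hhom hx hy ha hb hxa hyb
      _ = t x ^ (n : ℝ)⁻¹ + t y ^ (n : ℝ)⁻¹ + ε := by
          rw [Real.pow_rpow_inv_natCast (by positivity) hn]; ring
  · intro hsub
    refine ⟨K.convex, fun x hx y hy a b ha hb hab => ?_⟩
    have hax := K.smul_mem ha hx
    have hby := K.smul_mem hb hy
    have hx0 : 0 ≤ t x ^ (n : ℝ)⁻¹ := Real.rpow_nonneg (h0 x hx) _
    have hy0 : 0 ≤ t y ^ (n : ℝ)⁻¹ := Real.rpow_nonneg (h0 y hy) _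
    simp only [smul_eq_mul]
    calc t (a • x + b • y) = (t (a • x + b • y) ^ (n : ℝ)⁻¹) ^ n :=
          (Real.rpow_inv_natCast_pow (h0 _ (K.add_mem hax hby)) hn).symm
      _ ≤ (a * t x ^ (n : ℝ)⁻¹ + b * t y ^ (n : ℝ)⁻¹) ^ n := by
          rw [← rpow_inv_smul_of_homogeneous hn h0 hhom ha hx,
            ← rpow_inv_smul_of_homogeneous hn h0 hhom hb hy]
          gcongr
          · exact Real.rpow_nonneg (h0 _ (K.add_mem hax hby)) _
          · exact hsub _ hax _ hby
      _ ≤ a * (t x ^ (n : ℝ)⁻¹) ^ n + b * (t y ^ (n : ℝ)⁻¹) ^ n :=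
          (convexOn_pow n).2 hx0 hy0 ha hb hab
      _ = a * t x + b * t y := by
          rw [Real.rpow_inv_natCast_pow (h0 x hx) hn, Real.rpow_inv_natCast_pow (h0 y hy) hn]

end HomogeneousConvex

section Kernels

theorem IsKernel.abs {W : ℝ → ℝ → ℝ} (hW : IsKernel W) : IsKernel fun x y => |W x y| := by
  obtain ⟨hm, hs, C, hC⟩ := hW
  exact ⟨hm.abs, fun x y => by simp only [hs x y], C,
    fun x y => (abs_abs (W x y)).trans_le (hC x y)⟩

def kernelSubmodule : Submodule ℝ (ℝ → ℝ → ℝ) where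
  carrier := {W | IsKernel W}
  zero_mem' := ⟨measurable_const, fun _ _ => rfl, 0, fun _ _ => by simp⟩
  add_mem' := by
    rintro U W ⟨hUm, hUs, CU, hCU⟩ ⟨hWm, hWs, CW, hCW⟩
    exact ⟨hUm.add hWm, fun x y => by simp [hUs x y, hWs x y], CU + CW,
      fun x y => (abs_add_le _ _).trans (add_le_add (hCU x y) (hCW x y))⟩
  smul_mem' := by
    rintro c W ⟨hWm, hWs, C, hC⟩
    exact ⟨hWm.const_smul c, fun x y => by simp [hWs x y], |c| * C,
      fun x y => by simpa [abs_mul] using mul_le_mul_of_nonneg_left (hC x y) (abs_nonneg c)⟩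

def nonnegKernelCone : PointedCone ℝ (ℝ → ℝ → ℝ) :=
  (kernelSubmodule : PointedCone ℝ (ℝ → ℝ → ℝ)) ⊓ PointedCone.positive ℝ (ℝ → ℝ → ℝ)

theorem mem_nonnegKernelCone {W : ℝ → ℝ → ℝ} :
    W ∈ nonnegKernelCone ↔ IsKernel W ∧ 0 ≤ W :=
  Iff.rfl

theorem IsKernel.abs_mem_nonnegKernelCone {W : ℝ → ℝ → ℝ} (hW : IsKernel W) :
    (fun x y => |W x y|) ∈ nonnegKernelCone :=
  ⟨hW.abs, fun x y => abs_nonneg (W x y)⟩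

theorem IsGraphon.mem_nonnegKernelCone {W : ℝ → ℝ → ℝ} (hW : IsGraphon W) :
    W ∈ nonnegKernelCone := by
  obtain ⟨hm, hs, hb⟩ := hW
  exact ⟨⟨hm, hs, 1, fun x y => abs_le.2 ⟨by linarith [(hb x y).1], (hb x y).2⟩⟩,
    fun x y => (hb x y).1⟩

theorem isGraphon_of_mem_nonnegKernelCone {W : ℝ → ℝ → ℝ} (hW : W ∈ nonnegKernelCone)
    (h1 : ∀ x y, W x y ≤ 1) : IsGraphon W :=
  ⟨hW.1.1, hW.1.2.1, fun x y => ⟨hW.2 x y, h1 x y⟩⟩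

theorem exists_inv_smul_isGraphon {U W : ℝ → ℝ → ℝ} (hU : U ∈ nonnegKernelCone)
    (hW : W ∈ nonnegKernelCone) :
    ∃ C : ℝ, 0 < C ∧ IsGraphon (C⁻¹ • U) ∧ IsGraphon (C⁻¹ • W) := by
  obtain ⟨CU, hCU⟩ := hU.1.2.2
  obtain ⟨CW, hCW⟩ := hW.1.2.2
  have hCU0 : 0 ≤ CU := (abs_nonneg _).trans (hCU 0 0)
  have hCW0 : 0 ≤ CW := (abs_nonneg _).trans (hCW 0 0)
  have hC : 0 < CU + CW + 1 := by positivity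
  refine ⟨CU + CW + 1, hC, ?_, ?_⟩
  · refine isGraphon_of_mem_nonnegKernelCone (nonnegKernelCone.smul_mem (by positivity) hU)
      fun x y => inv_mul_le_one_of_le₀ ?_ hC.le
    linarith [le_abs_self (U x y), hCU x y]
  · refine isGraphon_of_mem_nonnegKernelCone (nonnegKernelCone.smul_mem (by positivity) hW)
      fun x y => inv_mul_le_one_of_le₀ ?_ hC.le
    linarith [le_abs_self (W x y), hCW x y]

end Kernels

section HomDensity

variable {V : Type} [Fintype V] [LinearOrder V] (H : SimpleGraph V) [DecidableRel H.Adj]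

theorem homDensity_smul (c : ℝ) (W : ℝ → ℝ → ℝ) :
    homDensity H (c • W) = c ^ edgeCount H * homDensity H W := by
  simp only [homDensity, Pi.smul_apply, smul_eq_mul, Finset.prod_mul_distrib,
    Finset.prod_const, integral_const_mul]
  rfl

theorem homDensity_nonneg {W : ℝ → ℝ → ℝ} (hW : 0 ≤ W) : 0 ≤ homDensity H W :=
  integral_nonneg fun _ => Finset.prod_nonneg fun _ _ => hW _ _

theorem measurable_homDensity_integrand {W : ℝ → ℝ → ℝ}
    (hm : Measurable (Function.uncurry W)) :
    Measurable (fun x : V → ℝ =>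
      ∏ p ∈ Finset.univ.filter (fun p : V × V => p.1 < p.2 ∧ H.Adj p.1 p.2), W (x p.1) (x p.2)) :=
  Finset.measurable_prod _ fun p _ =>
    hm.comp (f := fun x : V → ℝ => (x p.1, x p.2))
      ((measurable_pi_apply p.1).prodMk (measurable_pi_apply p.2))

theorem integrableOn_homDensity_integrand {W : ℝ → ℝ → ℝ}
    (hm : Measurable (Function.uncurry W)) {C : ℝ} (hC : ∀ x y, |W x y| ≤ C) :
    IntegrableOn (fun x : V → ℝ =>
      ∏ p ∈ Finset.univ.filter (fun p : V × V => p.1 < p.2 ∧ H.Adj p.1 p.2), W (x p.1) (x p.2))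
      (Set.univ.pi fun _ : V => Set.Icc (0 : ℝ) 1) := by
  refine Measure.integrableOn_of_bounded (M := C ^ edgeCount H)
    (isCompact_univ_pi fun _ => isCompact_Icc).measure_lt_top.ne
    (measurable_homDensity_integrand H hm).aestronglyMeasurable
    (ae_of_all _ fun x => ?_)
  rw [Real.norm_eq_abs, Finset.abs_prod, edgeCount, ← Finset.prod_const]
  exact Finset.prod_le_prod (fun _ _ => abs_nonneg _) fun _ _ => hC _ _

theorem homDensity_mono {U W : ℝ → ℝ → ℝ} (hUm : Measurable (Function.uncurry U))
    (hWm : Measurable (Function.uncurry W)) {C : ℝ} (hC : ∀ x y, |W x y| ≤ C) (hU : 0 ≤ U)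
    (hUW : U ≤ W) : homDensity H U ≤ homDensity H W := by
  have hCU : ∀ x y, |U x y| ≤ C := fun x y => by
    rw [abs_of_nonneg (hU x y)]
    exact (hUW x y).trans ((le_abs_self _).trans (hC x y))
  refine setIntegral_mono_on (integrableOn_homDensity_integrand H hUm hCU)
    (integrableOn_homDensity_integrand H hWm hC)
    (MeasurableSet.univ_pi fun _ => measurableSet_Icc) fun x _ => ?_
  exact Finset.prod_le_prod (fun _ _ => hU _ _) fun _ _ => hUW _ _

theorem weaklyNorming_iff_rpow_inv_add_le :
    WeaklyNorming H ↔ ∀ U ∈ nonnegKernelCone, ∀ W ∈ nonnegKernelCone,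
      homDensity H (U + W) ^ (edgeCount H : ℝ)⁻¹ ≤
        homDensity H U ^ (edgeCount H : ℝ)⁻¹ + homDensity H W ^ (edgeCount H : ℝ)⁻¹ := by
  constructor
  · intro hWN U hU W hW
    have habs : ∀ W' ∈ nonnegKernelCone, (fun x y => |W' x y|) = W' :=
      fun W' hW' => funext₂ fun x y => abs_of_nonneg (hW'.2 x y)
    have h := hWN U W hU.1 hW.1
    rwa [habs U hU, habs W hW, show (fun x y => |U x y + W x y|) = U + W from
      habs (U + W) (nonnegKernelCone.add_mem hU hW)] at h
  · intro hsub U W hU hW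
    have hU' := hU.abs_mem_nonnegKernelCone
    have hW' := hW.abs_mem_nonnegKernelCone
    have hsum := nonnegKernelCone.add_mem hU' hW'
    obtain ⟨C, hC⟩ := hsum.1.2.2
    have hmono : homDensity H (fun x y => |U x y + W x y|) ≤
        homDensity H ((fun x y => |U x y|) + fun x y => |W x y|) :=
      homDensity_mono H (hU.1.add hW.1).abs hsum.1.1 hC
        (fun x y => abs_nonneg _) fun x y => abs_add_le _ _
    calc homDensity H (fun x y => |U x y + W x y|) ^ (edgeCount H : ℝ)⁻¹
        ≤ homDensity H ((fun x y => |U x y|) + fun x y => |W x y|) ^ (edgeCount H : ℝ)⁻¹ :=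
          Real.rpow_le_rpow (homDensity_nonneg H fun x y => abs_nonneg _) hmono (by positivity)
      _ ≤ _ := hsub _ hU' _ hW'

theorem convexOn_nonnegKernelCone_iff :
    ConvexOn ℝ nonnegKernelCone (homDensity H) ↔
      ∀ W₁ W₂ : ℝ → ℝ → ℝ, IsGraphon W₁ → IsGraphon W₂ →
        ∀ l : ℝ, l ∈ Set.Icc (0 : ℝ) 1 →
          homDensity H (fun x y => l * W₁ x y + (1 - l) * W₂ x y) ≤
            l * homDensity H W₁ + (1 - l) * homDensity H W₂ := by
  constructor
  · intro h W₁ W₂ h₁ h₂ l hl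
    exact h.2 h₁.mem_nonnegKernelCone h₂.mem_nonnegKernelCone hl.1 (by linarith [hl.2]) (by ring)
  · intro h
    refine ⟨nonnegKernelCone.convex, fun U hU W hW a b ha hb hab => ?_⟩
    obtain rfl : b = 1 - a := by linarith
    obtain ⟨C, hC, hU₁, hW₁⟩ := exists_inv_smul_isGraphon hU hW
    have hconv := h _ _ hU₁ hW₁ a ⟨ha, by linarith⟩
    change homDensity H (a • C⁻¹ • U + (1 - a) • C⁻¹ • W) ≤
      a * homDensity H (C⁻¹ • U) + (1 - a) * homDensity H (C⁻¹ • W) at hconv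
    rw [smul_comm a, smul_comm (1 - a), ← smul_add, homDensity_smul, homDensity_smul,
      homDensity_smul] at hconv
    refine le_of_mul_le_mul_left ?_ (by positivity : 0 < C⁻¹ ^ edgeCount H)
    simp only [smul_eq_mul]
    linear_combination hconv

end HomDensity

theorem weaklyNorming_iff_convex {V : Type} [Fintype V] [LinearOrder V]
    (H : SimpleGraph V) [DecidableRel H.Adj] (he : 1 ≤ edgeCount H) :
    WeaklyNorming H ↔
      ∀ W₁ W₂ : ℝ → ℝ → ℝ, IsGraphon W₁ → IsGraphon W₂ →
        ∀ l : ℝ, l ∈ Set.Icc (0 : ℝ) 1 →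
          homDensity H (fun x y => l * W₁ x y + (1 - l) * W₂ x y) ≤
            l * homDensity H W₁ + (1 - l) * homDensity H W₂ := by
  rw [weaklyNorming_iff_rpow_inv_add_le, ← convexOn_nonnegKernelCone_iff,
    convexOn_iff_rpow_inv_add_le_of_homogeneous (Nat.one_le_iff_ne_zero.mp he)
      (fun W hW => homDensity_nonneg H (mem_nonnegKernelCone.1 hW).2)
      fun c _ W _ => homDensity_smul H c W]
end

section
/- For every integer k > 4, the graph C_k^⋈ contains an edge e = xy such that the set N*(e) of vertices that are adjacent to x or to y but are distinct from x and y induces exactly one edge; equivalently, e is contained in exactly one 4-cycle of C_k^⋈. -/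
open MeasureTheory

/-! Take the edge `e = (0,0)(1,1)`. Its neighbourhood `N*(e)` is `{(0,1), (k-1,1), (1,0), (2,0)}`,
and since `C_k^⋈` only joins the two layers, an edge inside `N*(e)` pairs an index in `{0, k-1}`
with one in `{1, 2}`. Of these pairs only `(0, 1)` is at cyclic distance at most one: the others
are at distance `2`, `2` and `3`, which is where `4 < k` is needed. -/

/-- The set `N*(xy)` of the paper. -/
def SimpleGraph.edgeNeighborSet {V : Type*} (G : SimpleGraph V) (x y : V) : Set V :=
  {c | c ≠ x ∧ c ≠ y ∧ (G.Adj x c ∨ G.Adj y c)}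

theorem Nat.add_one_mod_eq_iff {u v k : ℕ} (hu : u < k) (hv : v < k) :
    (u + 1) % k = v ↔ u + 1 = v ∨ (u + 1 = k ∧ v = 0) := by
  rcases Nat.lt_or_ge (u + 1) k with h | h
  · rw [Nat.mod_eq_of_lt h]; omega
  · rw [show u + 1 = k by omega, Nat.mod_self]; omega

theorem cycleBowtie_adj_iff {k : ℕ} {p q : Fin k × Fin 2} :
    (cycleBowtie k).Adj p q ↔ p.2 ≠ q.2 ∧
      (p.1.val = q.1.val ∨ p.1.val + 1 = q.1.val ∨ q.1.val + 1 = p.1.val ∨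
        (p.1.val + 1 = k ∧ q.1.val = 0) ∨ (q.1.val + 1 = k ∧ p.1.val = 0)) := by
  change _ ∧ _ ↔ _
  rw [Fin.ext_iff, Nat.add_one_mod_eq_iff p.1.2 q.1.2, Nat.add_one_mod_eq_iff q.1.2 p.1.2]
  tauto

theorem mem_edgeNeighborSet_cycleBowtie_iff {k : ℕ} (hk : 2 < k) (c : Fin k × Fin 2) :
    c ∈ (cycleBowtie k).edgeNeighborSet (⟨0, by omega⟩, 0) (⟨1, by omega⟩, 1) ↔
      (c.2 = 1 ∧ (c.1.val = 0 ∨ c.1.val = k - 1)) ∨ (c.2 = 0 ∧ (c.1.val = 1 ∨ c.1.val = 2)) := by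
  simp only [SimpleGraph.edgeNeighborSet, Set.mem_ofPred_eq, cycleBowtie_adj_iff, ne_eq,
    Prod.ext_iff, Fin.ext_iff, Fin.val_zero, Fin.val_one, and_true]
  omega

theorem cycleBowtie_adj_of_mem_edgeNeighborSet {k : ℕ} (hk : 4 < k) {c d : Fin k × Fin 2}
    (hc : c ∈ (cycleBowtie k).edgeNeighborSet (⟨0, by omega⟩, 0) (⟨1, by omega⟩, 1))
    (hd : d ∈ (cycleBowtie k).edgeNeighborSet (⟨0, by omega⟩, 0) (⟨1, by omega⟩, 1))
    (hcd : (cycleBowtie k).Adj c d) :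
    s(c, d) = s((⟨0, by omega⟩, 1), (⟨1, by omega⟩, 0)) := by
  rw [mem_edgeNeighborSet_cycleBowtie_iff (by omega)] at hc hd
  rw [cycleBowtie_adj_iff] at hcd
  simp only [Sym2.eq_iff, Prod.ext_iff, Fin.ext_iff, Fin.val_zero, Fin.val_one]
  omega

theorem cycleBowtie_edge_in_unique_C4 (k : ℕ) (hk : 4 < k) :
    ∃ x y : Fin k × Fin 2, (cycleBowtie k).Adj x y ∧
      ∃ a b : Fin k × Fin 2,
        (a ≠ x ∧ a ≠ y ∧ ((cycleBowtie k).Adj x a ∨ (cycleBowtie k).Adj y a)) ∧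
        (b ≠ x ∧ b ≠ y ∧ ((cycleBowtie k).Adj x b ∨ (cycleBowtie k).Adj y b)) ∧
        (cycleBowtie k).Adj a b ∧
        ∀ c d : Fin k × Fin 2,
          (c ≠ x ∧ c ≠ y ∧ ((cycleBowtie k).Adj x c ∨ (cycleBowtie k).Adj y c)) →
          (d ≠ x ∧ d ≠ y ∧ ((cycleBowtie k).Adj x d ∨ (cycleBowtie k).Adj y d)) →
          (cycleBowtie k).Adj c d →
          ((c = a ∧ d = b) ∨ (c = b ∧ d = a)) := by
  refine ⟨(⟨0, by omega⟩, 0), (⟨1, by omega⟩, 1), cycleBowtie_adj_iff.2 (by simp),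
    (⟨0, by omega⟩, 1), (⟨1, by omega⟩, 0),
    (mem_edgeNeighborSet_cycleBowtie_iff (by omega) _).2 (by simp),
    (mem_edgeNeighborSet_cycleBowtie_iff (by omega) _).2 (by simp),
    cycleBowtie_adj_iff.2 (by simp),
    fun c d hc hd hcd => Sym2.eq_iff.1 (cycleBowtie_adj_of_mem_edgeNeighborSet hk hc hd hcd)⟩
end

section
/- For every integer k > 4 and every vertex subset X of C_k^⋈ such that the subgraph induced by X contains exactly two edges, the set N*(X) = N(X) \ X contains two adjacent vertices (i.e., N*(X) contains an edge of C_k^⋈). -/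
open MeasureTheory

/-!
An induced edge `xy` of `X` whose twins `x'`, `y'` (the other copies of the same vertices of `G`)
lie outside `X` already gives the edge `x'y'` of `N*(X)`, since `x ~ x'`, `y ~ y'` and `x' ~ y'`.
Otherwise `X` contains both copies of some vertex `u` of `G`. Each neighbour `w` of `u` in `G`
either has both copies outside `X`, and they form an edge of `N*(X)`, or has a copy in `X`, which
spans an induced edge with a copy of `u`. Two such neighbours together with the twin edge at `u`
would give three induced edges.
-/

namespace SimpleGraph

variable {V : Type*} (G : SimpleGraph V)

/-- The graph `G^⋈`. -/
def bowtie : SimpleGraph (V × Fin 2) where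
  Adj p q := p.2 ≠ q.2 ∧ (p.1 = q.1 ∨ G.Adj p.1 q.1)
  symm := ⟨fun _ _ h => ⟨h.1.symm, h.2.imp Eq.symm fun h => h.symm⟩⟩
  loopless := ⟨fun _ h => h.1 rfl⟩

/-- `N*(X) = N(X) \ X`. -/
def outerBoundary (X : Set V) : Set V := {a | a ∉ X ∧ ∃ x ∈ X, G.Adj x a}

variable {G}

@[simp]
theorem bowtie_adj {p q : V × Fin 2} :
    G.bowtie.Adj p q ↔ p.2 ≠ q.2 ∧ (p.1 = q.1 ∨ G.Adj p.1 q.1) :=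
  Iff.rfl

theorem exists_adj_outerBoundary_of_adj_of_notMem {X : Set (V × Fin 2)} {u v : V}
    {i j i' j' : Fin 2} (hx : (u, i) ∈ X) (hy : (v, j) ∈ X) (hxy : G.bowtie.Adj (u, i) (v, j))
    (hx' : (u, i') ∉ X) (hy' : (v, j') ∉ X) :
    ∃ a ∈ G.bowtie.outerBoundary X, ∃ b ∈ G.bowtie.outerBoundary X, G.bowtie.Adj a b := by
  have hi : i' ≠ i := by rintro rfl; exact hx' hx
  have hj : j' ≠ j := by rintro rfl; exact hy' hy
  have hij : i' ≠ j' := by have : i ≠ j := hxy.1; omega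
  exact ⟨(u, i'), ⟨hx', (u, i), hx, hi.symm, .inl rfl⟩,
    (v, j'), ⟨hy', (v, j), hy, hj.symm, .inl rfl⟩, hij, hxy.2⟩

theorem exists_adj_outerBoundary_of_forall_mem_of_forall_notMem {X : Set (V × Fin 2)} {u w : V}
    (hu : ∀ i, (u, i) ∈ X) (hw : ∀ i, (w, i) ∉ X) (huw : G.Adj u w) :
    ∃ a ∈ G.bowtie.outerBoundary X, ∃ b ∈ G.bowtie.outerBoundary X, G.bowtie.Adj a b :=
  ⟨(w, 0), ⟨hw 0, (u, 1), hu 1, by simp, .inr huw⟩,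
    (w, 1), ⟨hw 1, (u, 0), hu 0, by simp, .inr huw⟩, by simp, .inl rfl⟩

theorem two_lt_ncard_inducedEdges {X : Set (V × Fin 2)} {u w₁ w₂ : V} {i₁ i₂ : Fin 2}
    (hfin : {e ∈ G.bowtie.edgeSet | ∀ v ∈ e, v ∈ X}.Finite) (hu : ∀ i, (u, i) ∈ X)
    (h₁ : G.Adj u w₁) (h₂ : G.Adj u w₂) (hw : w₁ ≠ w₂) (hw₁ : (w₁, i₁) ∈ X)
    (hw₂ : (w₂, i₂) ∈ X) :
    2 < {e ∈ G.bowtie.edgeSet | ∀ v ∈ e, v ∈ X}.ncard := by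
  have hne : ∀ i : Fin 2, i ≠ i + 1 := by decide
  have hmem {p q : V × Fin 2} (hpq : G.bowtie.Adj p q) (hp : p ∈ X) (hq : q ∈ X) :
      s(p, q) ∈ {e ∈ G.bowtie.edgeSet | ∀ v ∈ e, v ∈ X} :=
    ⟨hpq, fun v hv => by rcases Sym2.mem_iff.mp hv with rfl | rfl <;> assumption⟩
  refine (Set.two_lt_ncard hfin).mpr
    ⟨s((u, 0), (u, 1)), hmem ⟨by simp, .inl rfl⟩ (hu 0) (hu 1),
      s((w₁, i₁), (u, i₁ + 1)), hmem ⟨hne i₁, .inr h₁.symm⟩ hw₁ (hu _),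
      s((w₂, i₂), (u, i₂ + 1)), hmem ⟨hne i₂, .inr h₂.symm⟩ hw₂ (hu _),
      ?_, ?_, ?_⟩ <;>
  simp [h₁.ne, h₂.ne, hw]

theorem exists_adj_outerBoundary_of_forall_mem [G.LocallyFinite] (hG : ∀ u, 2 ≤ G.degree u)
    {X : Set (V × Fin 2)} (hX : {e ∈ G.bowtie.edgeSet | ∀ v ∈ e, v ∈ X}.ncard = 2) {u : V}
    (hu : ∀ i, (u, i) ∈ X) :
    ∃ a ∈ G.bowtie.outerBoundary X, ∃ b ∈ G.bowtie.outerBoundary X, G.bowtie.Adj a b := by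
  obtain ⟨w₁, h₁, w₂, h₂, hw⟩ := Finset.one_lt_card.mp (hG u)
  rw [mem_neighborFinset] at h₁ h₂
  by_cases hw₁ : ∃ i, (w₁, i) ∈ X
  · by_cases hw₂ : ∃ i, (w₂, i) ∈ X
    · obtain ⟨i₁, hi₁⟩ := hw₁
      obtain ⟨i₂, hi₂⟩ := hw₂
      have hfin := Set.finite_of_ncard_ne_zero (hX ▸ two_ne_zero)
      have := two_lt_ncard_inducedEdges hfin hu h₁ h₂ hw hi₁ hi₂
      omega
    · exact exists_adj_outerBoundary_of_forall_mem_of_forall_notMem hu (not_exists.mp hw₂) h₂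
  · exact exists_adj_outerBoundary_of_forall_mem_of_forall_notMem hu (not_exists.mp hw₁) h₁

theorem exists_adj_outerBoundary_of_ncard_eq_two [G.LocallyFinite] (hG : ∀ u, 2 ≤ G.degree u)
    {X : Set (V × Fin 2)} (hX : {e ∈ G.bowtie.edgeSet | ∀ v ∈ e, v ∈ X}.ncard = 2) :
    ∃ a ∈ G.bowtie.outerBoundary X, ∃ b ∈ G.bowtie.outerBoundary X, G.bowtie.Adj a b := by
  by_cases htwin : ∃ u, ∀ i, (u, i) ∈ X
  · obtain ⟨u, hu⟩ := htwin
    exact exists_adj_outerBoundary_of_forall_mem hG hX hu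
  push Not at htwin
  obtain ⟨e, he, heX⟩ := Set.nonempty_of_ncard_ne_zero (hX ▸ two_ne_zero)
  induction e using Sym2.ind with
  | h x y =>
    obtain ⟨u, i⟩ := x
    obtain ⟨v, j⟩ := y
    obtain ⟨i', hi'⟩ := htwin u
    obtain ⟨j', hj'⟩ := htwin v
    exact exists_adj_outerBoundary_of_adj_of_notMem (heX _ (Sym2.mem_mk_left _ _))
      (heX _ (Sym2.mem_mk_right _ _)) he hi' hj'

end SimpleGraph

open SimpleGraph

theorem cycleBowtie_eq_bowtie_cycleGraph (n : ℕ) :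
    cycleBowtie (n + 2) = (cycleGraph (n + 2)).bowtie := by
  ext p q
  have hsucc (a b : Fin (n + 2)) : ((a : ℕ) + 1) % (n + 2) = b ↔ b = a + 1 := by
    rw [eq_comm, Fin.ext_iff, Fin.val_add, Fin.val_one]
  simp only [cycleBowtie, bowtie_adj, cycleGraph_adj, hsucc, sub_eq_iff_eq_add']
  tauto

theorem cycleBowtie_nstar_edge (k : ℕ) (hk : 4 < k) (X : Set (Fin k × Fin 2))
    (hX : {e ∈ (cycleBowtie k).edgeSet | ∀ v ∈ e, v ∈ X}.ncard = 2) :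
    ∃ a b : Fin k × Fin 2, a ∉ X ∧ b ∉ X ∧
      (∃ x ∈ X, (cycleBowtie k).Adj x a) ∧ (∃ x ∈ X, (cycleBowtie k).Adj x b) ∧
      (cycleBowtie k).Adj a b := by
  obtain ⟨n, rfl⟩ : ∃ n, k = n + 3 := ⟨k - 3, by omega⟩
  rw [cycleBowtie_eq_bowtie_cycleGraph] at hX ⊢
  obtain ⟨a, ⟨ha, hXa⟩, b, ⟨hb, hXb⟩, hab⟩ :=
    exists_adj_outerBoundary_of_ncard_eq_two (fun _ => cycleGraph_degree_three_le.ge) hX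
  exact ⟨a, b, ha, hb, hXa, hXb, hab⟩
end

section
/- Let n ≥ 1 and let A ∈ Sym_{2n} be the block matrix [[J_n, −J_n], [−J_n, J_n]], where J_n is the n×n all-ones matrix, and let J_{2n} be the 2n×2n all-ones matrix. Then A is nonzero and, for every norming graph H, the Hessian of P_{H,2n} at A is singular; more precisely, its associated symmetric bilinear form annihilates the direction J_{2n}: for every B ∈ Sym_{2n}, (∂²/∂s∂u) P_{H,2n}(A + sJ_{2n} + uB) |_{s=u=0} = 0. -/
/-!
A norming graph has only even degrees: if `v` had odd degree, the kernel
`W(x,y) = σ(x)σ(y)`, with `σ = 1` on `[0,1/2)` and `σ = -1` on `[1/2,1]`, would satisfy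
`t_H(W) = ∏_u ∫ σ^{deg u} = 0` although `W` vanishes nowhere.

The matrix `A` is `x xᵀ` for the sign vector `x = (1,…,1,-1,…,-1)`, and the mixed derivative is
`∑_φ ∑_{e ≠ f} (∏_{g ≠ e,f} A_{φ(g)}) B_{φ(f)}`. For fixed `e ≠ f` pick an endpoint `w` of `e`
that is not an endpoint of `f`. Then `w` has odd degree in `E(H) ∖ {e,f}`, so moving `φ(w)` to
the other half of `[2n]` flips the sign of the product and leaves `B_{φ(f)}` alone: the sum over
`φ` cancels.
-/

open MeasureTheory

open Finset

section PairDegree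

variable {V : Type*} [DecidableEq V]

def pairDegree (E : Finset (V × V)) (v : V) : ℕ :=
  #{p ∈ E | p.1 = v} + #{p ∈ E | p.2 = v}

theorem prod_mul_eq_prod_pow_pairDegree [Fintype V] {M : Type*} [CommMonoid M]
    (E : Finset (V × V)) (x : V → M) :
    ∏ p ∈ E, x p.1 * x p.2 = ∏ v, x v ^ pairDegree E v := by
  simp only [pairDegree, pow_add, prod_mul_distrib, ← prod_const, prod_fiberwise' E Prod.fst x,
    prod_fiberwise' E Prod.snd x]

theorem pairDegree_erase_of_mem {E : Finset (V × V)} {e : V × V} (he : e ∈ E)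
    (hloop : e.1 ≠ e.2) {w : V} (hw : e.1 = w ∨ e.2 = w) :
    pairDegree (E.erase e) w + 1 = pairDegree E w := by
  have h1 : 0 < #{p ∈ E | p.1 = e.1} := card_pos.2 ⟨e, mem_filter.2 ⟨he, rfl⟩⟩
  have h2 : 0 < #{p ∈ E | p.2 = e.2} := card_pos.2 ⟨e, mem_filter.2 ⟨he, rfl⟩⟩
  simp only [pairDegree, filter_erase, card_erase_eq_ite, mem_filter]
  rcases hw with rfl | rfl <;> simp only [he, hloop, hloop.symm, and_true, and_false,
    if_true, if_false] <;> omega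

theorem pairDegree_erase_of_notMem (E : Finset (V × V)) {f : V × V} {w : V}
    (h1 : f.1 ≠ w) (h2 : f.2 ≠ w) : pairDegree (E.erase f) w = pairDegree E w := by
  simp only [pairDegree, filter_erase, card_erase_eq_ite, mem_filter, h1, h2, and_false,
    if_false]

theorem sum_prod_mul_eq_zero_of_odd_pairDegree [Fintype V] {ι : Type*} [Fintype ι]
    (E : Finset (V × V)) {w : V} (hw : Odd (pairDegree E w)) (x : ι → ℝ) (τ : ι ≃ ι)
    (hτ : ∀ i, x (τ i) = -x i) (G : (V → ι) → ℝ)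
    (hG : ∀ φ i, G (Function.update φ w i) = G φ) :
    ∑ φ : V → ι, (∏ p ∈ E, x (φ p.1) * x (φ p.2)) * G φ = 0 := by
  have hprod (φ : V → ι) : ∏ p ∈ E, x (φ p.1) * x (φ p.2) = ∏ v, x (φ v) ^ pairDegree E v :=
    prod_mul_eq_prod_pow_pairDegree E (x ∘ φ)
  simp only [hprod]
  set F : (V → ι) → ℝ := fun φ => (∏ v, x (φ v) ^ pairDegree E v) * G φ
  let flip : (V → ι) ≃ (V → ι) := Equiv.piCongrRight (Function.update (fun _ => .refl ι) w τ)
  have hflip (φ : V → ι) : flip φ = Function.update φ w (τ (φ w)) := by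
    ext v
    by_cases hv : v = w
    · subst hv; simp [flip]
    · simp [flip, hv]
  have hF (φ : V → ι) : F (flip φ) = -F φ := by
    simp only [F, hflip]
    rw [hG, Fintype.prod_eq_mul_prod_compl w, Fintype.prod_eq_mul_prod_compl w,
      Function.update_self, hτ, hw.neg_pow,
      prod_congr rfl fun v hv => by rw [Function.update_of_ne (by simpa using hv)]]
    ring
  have hneg : ∑ φ, F φ = -∑ φ, F φ := by
    rw [← sum_neg_distrib, ← Fintype.sum_equiv flip _ _ fun _ => rfl]
    exact sum_congr rfl fun φ _ => hF φ
  linarith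

end PairDegree

theorem exists_endpoint_not_endpoint_of_ne {V : Type*} [LinearOrder V] {e f : V × V}
    (he : e.1 < e.2) (hf : f.1 < f.2) (hef : e ≠ f) :
    ∃ w, (e.1 = w ∨ e.2 = w) ∧ f.1 ≠ w ∧ f.2 ≠ w := by
  obtain ⟨a, b⟩ := e
  obtain ⟨c, d⟩ := f
  by_contra! h
  have h1 := h a (.inl rfl)
  have h2 := h b (.inr rfl)
  simp only [Ne, Prod.mk.injEq, not_and] at *
  rcases or_iff_not_imp_left.2 h1 with rfl | rfl <;>
    rcases or_iff_not_imp_left.2 h2 with rfl | rfl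
  exacts [lt_irrefl _ he, hef rfl rfl, lt_asymm he hf, lt_irrefl _ he]

theorem hasDerivAt_prod_add_mul {κ : Type*} [DecidableEq κ] (E : Finset κ) (a b : κ → ℝ)
    (t : ℝ) :
    HasDerivAt (fun t => ∏ p ∈ E, (a p + t * b p))
      (∑ e ∈ E, (∏ g ∈ E.erase e, (a g + t * b g)) * b e) t := by
  simpa using HasDerivAt.fun_finsetProd fun p _ => ((hasDerivAt_id t).mul_const (b p)).const_add _

theorem deriv_deriv_sum_prod_add_add_mul {ι κ : Type*} [Fintype ι] [DecidableEq κ]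
    (E : Finset κ) (a b : ι → κ → ℝ) :
    deriv (fun u => deriv (fun s => ∑ φ, ∏ p ∈ E, (a φ p + s + u * b φ p)) 0) 0 =
      ∑ φ, ∑ e ∈ E, ∑ f ∈ E.erase e, (∏ g ∈ (E.erase e).erase f, a φ g) * b φ f := by
  have inner (u : ℝ) : deriv (fun s => ∑ φ, ∏ p ∈ E, (a φ p + s + u * b φ p)) 0 =
      ∑ φ, ∑ e ∈ E, ∏ g ∈ E.erase e, (a φ g + u * b φ g) := by
    have := HasDerivAt.fun_sum fun φ (_ : φ ∈ univ) =>
      hasDerivAt_prod_add_mul E (fun p => a φ p + u * b φ p) (fun _ => 1) 0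
    simp only [add_zero, mul_one] at this
    rw [← this.deriv]
    congr 1; ext s
    exact sum_congr rfl fun φ _ => prod_congr rfl fun p _ => by ring
  have outer := HasDerivAt.fun_sum fun φ (_ : φ ∈ univ) => HasDerivAt.fun_sum
    fun e (_ : e ∈ E) => hasDerivAt_prod_add_mul (E.erase e) (a φ) (b φ) 0
  simp only [zero_mul, add_zero] at outer
  simp only [inner, outer.deriv]

theorem deriv_deriv_sum_prod_vecMulVec_eq_zero {V : Type*} [Fintype V] [LinearOrder V] {m : ℕ}
    (E : Finset (V × V)) (hE : ∀ p ∈ E, p.1 < p.2) (heven : ∀ v, Even (pairDegree E v))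
    (x : Fin m → ℝ) (τ : Fin m ≃ Fin m) (hτ : ∀ i, x (τ i) = -x i)
    (B : Matrix (Fin m) (Fin m) ℝ) :
    deriv (fun u : ℝ => deriv (fun s : ℝ => ∑ φ : V → Fin m, ∏ p ∈ E,
      (Matrix.vecMulVec x x + s • onesMat m + u • B) (φ p.1) (φ p.2)) 0) 0 = 0 := by
  simp only [Matrix.add_apply, Matrix.smul_apply, Matrix.vecMulVec_apply, onesMat,
    Matrix.of_apply, smul_eq_mul, mul_one, deriv_deriv_sum_prod_add_add_mul]
  rw [sum_comm]
  refine sum_eq_zero fun e he => ?_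
  rw [sum_comm]
  refine sum_eq_zero fun f hf => ?_
  obtain ⟨hfe, hfE⟩ := mem_erase.1 hf
  obtain ⟨w, hwe, hw1, hw2⟩ :=
    exists_endpoint_not_endpoint_of_ne (hE e he) (hE f hfE) (Ne.symm hfe)
  refine sum_prod_mul_eq_zero_of_odd_pairDegree _ (w := w) ?_ x τ hτ _ fun φ i => ?_
  · have := heven w
    rw [← pairDegree_erase_of_mem he (hE e he).ne hwe, Nat.even_add_one,
      Nat.not_even_iff_odd] at this
    rwa [pairDegree_erase_of_notMem _ hw1 hw2]
  · simp only [Function.update_of_ne hw1, Function.update_of_ne hw2]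

theorem setIntegral_univ_pi_prod {ι : Type*} [Fintype ι] {E : ι → Type*}
    [∀ i, MeasureSpace (E i)] [∀ i, SigmaFinite (volume : Measure (E i))]
    (s : ∀ i, Set (E i)) (f : ∀ i, E i → ℝ) :
    ∫ x in Set.univ.pi s, ∏ i, f i (x i) = ∏ i, ∫ t in s i, f i t := by
  rw [volume_pi, Measure.restrict_pi_pi, integral_fintype_prod_eq_prod]

noncomputable def halfSign (x : ℝ) : ℝ := if x < 1 / 2 then 1 else -1

theorem measurable_halfSign : Measurable halfSign :=
  Measurable.ite measurableSet_Iio measurable_const measurable_const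

theorem halfSign_ne_zero (x : ℝ) : halfSign x ≠ 0 := by
  unfold halfSign; split_ifs <;> norm_num

theorem abs_halfSign (x : ℝ) : |halfSign x| = 1 := by
  unfold halfSign; split_ifs <;> norm_num

theorem halfSign_pow_of_odd {k : ℕ} (hk : Odd k) (x : ℝ) : halfSign x ^ k = halfSign x := by
  unfold halfSign; split_ifs
  · exact one_pow k
  · exact hk.neg_one_pow

theorem integral_halfSign : ∫ t in Set.Icc (0 : ℝ) 1, halfSign t = 0 := by
  have hsplit : Set.Icc (0 : ℝ) 1 = Set.Ico 0 (1 / 2) ∪ Set.Icc (1 / 2) 1 :=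
    (Set.Ico_union_Icc_eq_Icc (by norm_num) (by norm_num)).symm
  have hdisj : Disjoint (Set.Ico (0 : ℝ) (1 / 2)) (Set.Icc (1 / 2) 1) :=
    Set.disjoint_left.2 fun x hx hx' => hx.2.not_ge hx'.1
  have hlow : Set.EqOn halfSign (fun _ => 1) (Set.Ico 0 (1 / 2)) := fun x hx => if_pos hx.2
  have hhigh : Set.EqOn halfSign (fun _ => -1) (Set.Icc (1 / 2) 1) :=
    fun x hx => if_neg hx.1.not_gt
  have hlow_int : IntegrableOn halfSign (Set.Ico 0 (1 / 2)) :=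
    (integrableOn_const measure_Ico_lt_top.ne).congr_fun hlow.symm measurableSet_Ico
  have hhigh_int : IntegrableOn halfSign (Set.Icc (1 / 2) 1) :=
    (integrableOn_const measure_Icc_lt_top.ne).congr_fun hhigh.symm measurableSet_Icc
  rw [hsplit, setIntegral_union hdisj measurableSet_Icc hlow_int hhigh_int,
    setIntegral_congr_fun measurableSet_Ico hlow, setIntegral_congr_fun measurableSet_Icc hhigh,
    setIntegral_const, setIntegral_const, Real.volume_real_Ico, Real.volume_real_Icc]
  norm_num

section Graph

variable {V : Type} [Fintype V] [LinearOrder V] (H : SimpleGraph V) [DecidableRel H.Adj]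

def edgePairs : Finset (V × V) := Finset.univ.filter (fun p : V × V => p.1 < p.2 ∧ H.Adj p.1 p.2)

theorem homDensity_mul_self (g : ℝ → ℝ) :
    homDensity H (fun x y => g x * g y) =
      ∏ v, ∫ t in Set.Icc (0 : ℝ) 1, g t ^ pairDegree (edgePairs H) v := by
  have hprod (x : V → ℝ) : ∏ p ∈ edgePairs H, g (x p.1) * g (x p.2) =
      ∏ v, g (x v) ^ pairDegree (edgePairs H) v :=
    prod_mul_eq_prod_pow_pairDegree _ (g ∘ x)
  change ∫ x : V → ℝ in _, ∏ p ∈ edgePairs H, g (x p.1) * g (x p.2) = _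
  simp only [hprod]
  exact setIntegral_univ_pi_prod (fun _ => Set.Icc 0 1) fun v t => g t ^ pairDegree (edgePairs H) v

theorem Norming.even_pairDegree (hN : Norming H) (v : V) : Even (pairDegree (edgePairs H) v) := by
  by_contra hodd
  rw [Nat.not_even_iff_odd] at hodd
  set W : ℝ → ℝ → ℝ := fun x y => halfSign x * halfSign y
  have hW : IsKernel W := by
    refine ⟨?_, fun x y => mul_comm _ _, 1, fun x y => ?_⟩
    · exact (measurable_halfSign.comp measurable_fst).mul (measurable_halfSign.comp measurable_snd)
    · rw [abs_mul, abs_halfSign, abs_halfSign, mul_one]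
  have hzero : homDensity H W = 0 := by
    rw [homDensity_mul_self, prod_eq_zero (mem_univ v)]
    simp_rw [halfSign_pow_of_odd hodd]
    exact integral_halfSign
  have : (ae (volume.restrict (Set.Icc (0 : ℝ) 1 ×ˢ Set.Icc (0 : ℝ) 1))).NeBot := by
    rw [ae_restrict_neBot, Measure.volume_eq_prod, Measure.prod_prod, Real.volume_Icc]
    norm_num
  obtain ⟨p, hp⟩ := (hN.2 W hW hzero).exists
  exact mul_ne_zero (halfSign_ne_zero _) (halfSign_ne_zero _) hp

end Graph

def blockSign (n : ℕ) (i : Fin (2 * n)) : ℝ := if (i : ℕ) < n then 1 else -1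

theorem blockMat_eq_vecMulVec (n : ℕ) :
    blockMat n = Matrix.vecMulVec (blockSign n) (blockSign n) := by
  ext i j
  unfold blockMat blockSign
  by_cases hi : (i : ℕ) < n <;> by_cases hj : (j : ℕ) < n <;>
    simp [hi, hj, Matrix.vecMulVec_apply]

theorem blockSign_rev (n : ℕ) (i : Fin (2 * n)) : blockSign n i.rev = -blockSign n i := by
  have hrev : (i.rev : ℕ) < n ↔ ¬(i : ℕ) < n := by rw [Fin.val_rev]; omega
  unfold blockSign
  by_cases hi : (i : ℕ) < n <;>
    simp only [hrev, hi, not_true, not_false_eq_true, if_true, if_false, neg_neg]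

theorem hessian_singular_at_blockMat (n : ℕ) (hn : 1 ≤ n) :
    blockMat n ≠ 0 ∧
    ∀ (V : Type) [Fintype V] [LinearOrder V] (H : SimpleGraph V) [DecidableRel H.Adj],
      Norming H →
      ∀ B : Matrix (Fin (2*n)) (Fin (2*n)) ℝ, B.IsSymm →
        deriv (fun u : ℝ => deriv (fun s : ℝ =>
          graphPoly H (blockMat n + s • onesMat (2*n) + u • B)) 0) 0 = 0 := by
  refine ⟨fun h => ?_, fun V _ _ H _ hN B _ => ?_⟩
  · have h00 := congrFun (congrFun h ⟨0, by omega⟩) ⟨0, by omega⟩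
    simp [blockMat] at h00
  · rw [blockMat_eq_vecMulVec]
    exact deriv_deriv_sum_prod_vecMulVec_eq_zero (edgePairs H)
      (fun p hp => (mem_filter.1 hp).2.1) (hN.even_pairDegree H) _ Fin.revPerm (blockSign_rev n) B
end

section
/- If H is a norming graph, then for every n ≥ 1 the Hessian of P_{H,n} is positive semidefinite at every point of Sym_n: for all A, B ∈ Sym_n, (d²/ds²) P_{H,n}(A + sB) |_{s=0} ≥ 0. -/
open MeasureTheory

/-! The step function of `M` has homomorphism density `t_H(stepFn n M) = P_{H,n}(M) / n^{|V(H)|}`,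
so the norming property descends to `Sym_n`: `M ↦ |P_{H,n}(M)|^{1/e(H)}` is subadditive,
positively homogeneous, and vanishes only at `0`. Hence `P_{H,n}` has no zero on the arcs
`θ ↦ cos θ • M + sin θ • N` between non-proportional matrices. The arc from `J` to `-J` through
`[[1,-1],[-1,1]]` shows that `e(H)` is even, and then the arc from `J` to any `M` shows
`P_{H,n} ≥ 0`. So `s ↦ P_{H,n}(A + sB)` is the `e(H)`-th power of a nonnegative convex function,
hence convex, and its second derivative is nonnegative. -/

open Set

section GraphPoly

variable {V : Type} [Fintype V] [LinearOrder V] (H : SimpleGraph V) [DecidableRel H.Adj]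

theorem graphPoly_smul {n : ℕ} (c : ℝ) (M : Matrix (Fin n) (Fin n) ℝ) :
    graphPoly H (c • M) = c ^ edgeCount H * graphPoly H M := by
  simp only [graphPoly, edgeCount, Matrix.smul_apply, smul_eq_mul, Finset.prod_mul_distrib,
    Finset.prod_const, Finset.mul_sum]

theorem graphPoly_onesMat (n : ℕ) : graphPoly H (onesMat n) = (n : ℝ) ^ Fintype.card V := by
  simp [graphPoly, onesMat]

theorem continuous_graphPoly (n : ℕ) :
    Continuous (graphPoly H : Matrix (Fin n) (Fin n) ℝ → ℝ) := by
  unfold graphPoly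
  fun_prop

theorem differentiable_graphPoly_line {n : ℕ} (A B : Matrix (Fin n) (Fin n) ℝ) :
    Differentiable ℝ fun s : ℝ => graphPoly H (A + s • B) := by
  simp only [graphPoly, Matrix.add_apply, Matrix.smul_apply, smul_eq_mul]
  fun_prop

end GraphPoly

def gridCell (n : ℕ) (i : Fin n) : Set ℝ := Ico ((i : ℕ) / n) (((i : ℕ) + 1) / n)

theorem gridCell_subset {n : ℕ} (i : Fin n) : gridCell n i ⊆ Ico 0 1 := by
  have hn : (0 : ℝ) < n := by exact_mod_cast i.pos
  refine Ico_subset_Ico (by positivity) ?_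
  rw [div_le_one hn]
  exact_mod_cast i.is_lt

theorem mem_gridCell_iff {n : ℕ} (i : Fin n) {z : ℝ} (hz : 0 ≤ z) :
    z ∈ gridCell n i ↔ ⌊(n : ℝ) * z⌋₊ = i := by
  have hn : (0 : ℝ) < n := by exact_mod_cast i.pos
  rw [gridCell, mem_Ico, div_le_iff₀ hn, lt_div_iff₀ hn, Nat.floor_eq_iff (by positivity),
    mul_comm z]

theorem floor_eq_of_mem_gridCell {n : ℕ} {i : Fin n} {z : ℝ} (hz : z ∈ gridCell n i) :
    ⌊(n : ℝ) * z⌋₊ = i :=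
  (mem_gridCell_iff i (gridCell_subset i hz).1).1 hz

theorem exists_mem_gridCell {n : ℕ} (hn : 0 < n) {z : ℝ} (hz : z ∈ Ico (0 : ℝ) 1) :
    ∃ i : Fin n, z ∈ gridCell n i := by
  have hlt : ⌊(n : ℝ) * z⌋₊ < n := by
    rw [Nat.floor_lt (by positivity [hz.1])]
    exact mul_lt_of_lt_one_right (by exact_mod_cast hn) hz.2
  exact ⟨⟨_, hlt⟩, (mem_gridCell_iff _ hz.1).2 rfl⟩

theorem pairwise_disjoint_gridCell (n : ℕ) :
    Pairwise fun i j => Disjoint (gridCell n i) (gridCell n j) := by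
  intro i j hij
  refine Set.disjoint_left.2 fun z hi hj => hij (Fin.ext ?_)
  rw [← floor_eq_of_mem_gridCell hi, floor_eq_of_mem_gridCell hj]

theorem volume_gridCell {n : ℕ} (i : Fin n) :
    volume (gridCell n i) = ENNReal.ofReal (n : ℝ)⁻¹ := by
  rw [gridCell, Real.volume_Ico, div_sub_div_same, add_sub_cancel_left, one_div]

theorem stepFn_of_mem_gridCell {n : ℕ} (M : Matrix (Fin n) (Fin n) ℝ) {i j : Fin n} {x y : ℝ}
    (hx : x ∈ gridCell n i) (hy : y ∈ gridCell n j) : stepFn n M x y = M i j := by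
  rw [stepFn, dif_pos ⟨i.pos, gridCell_subset i hx, gridCell_subset j hy⟩]
  simp only [floor_eq_of_mem_gridCell hx, floor_eq_of_mem_gridCell hy, Nat.mod_eq_of_lt i.is_lt,
    Nat.mod_eq_of_lt j.is_lt]

theorem stepFn_add {n : ℕ} (M N : Matrix (Fin n) (Fin n) ℝ) :
    stepFn n (M + N) = fun x y => stepFn n M x y + stepFn n N x y := by
  ext x y
  unfold stepFn
  split <;> simp

theorem measurable_stepFn {n : ℕ} (M : Matrix (Fin n) (Fin n) ℝ) :
    Measurable (Function.uncurry (stepFn n M)) := by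
  rcases n.eq_zero_or_pos with rfl | hn
  · simp [Function.uncurry_def, stepFn, measurable_const]
  let F : ℕ × ℕ → ℝ := fun k => M ⟨k.1 % n, Nat.mod_lt _ hn⟩ ⟨k.2 % n, Nat.mod_lt _ hn⟩
  have h : Function.uncurry (stepFn n M) = fun p => if p ∈ Ico (0 : ℝ) 1 ×ˢ Ico (0 : ℝ) 1
      then F (⌊(n : ℝ) * p.1⌋₊, ⌊(n : ℝ) * p.2⌋₊) else 0 := by
    ext ⟨x, y⟩
    by_cases hxy : (x, y) ∈ Ico (0 : ℝ) 1 ×ˢ Ico (0 : ℝ) 1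
    · rw [if_pos hxy]
      exact dif_pos ⟨hn, hxy⟩
    · rw [if_neg hxy]
      exact dif_neg fun h => hxy h.2
  rw [h]
  refine Measurable.ite (measurableSet_Ico.prod measurableSet_Ico)
    ((measurable_of_countable F).comp ?_) measurable_const
  fun_prop

theorem stepFn_isKernel {n : ℕ} {M : Matrix (Fin n) (Fin n) ℝ} (hM : M.IsSymm) :
    IsKernel (stepFn n M) := by
  refine ⟨measurable_stepFn M, fun x y => ?_, ∑ i, ∑ j, |M i j|, fun x y => ?_⟩
  · unfold stepFn
    split_ifs with h h' h'
    · exact hM.apply _ _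
    · exact absurd ⟨h.1, h.2.2, h.2.1⟩ h'
    · exact absurd ⟨h'.1, h'.2.2, h'.2.1⟩ h
    · rfl
  · have hle : ∀ i j, |M i j| ≤ ∑ i, ∑ j, |M i j| := fun i j =>
      (Finset.single_le_sum (f := fun j => |M i j|) (fun _ _ => abs_nonneg _)
        (Finset.mem_univ j)).trans
      (Finset.single_le_sum (f := fun i => ∑ j, |M i j|)
        (fun _ _ => Finset.sum_nonneg fun _ _ => abs_nonneg _) (Finset.mem_univ i))
    unfold stepFn
    split
    · exact hle _ _
    · simpa using Finset.sum_nonneg fun i _ => Finset.sum_nonneg fun j _ => abs_nonneg (M i j)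

theorem pi_Ico_eq_iUnion_pi_gridCell (V : Type) {n : ℕ} (hn : 0 < n) :
    (univ.pi fun _ : V => Ico (0 : ℝ) 1) =
      ⋃ φ : V → Fin n, univ.pi fun v => gridCell n (φ v) := by
  ext x
  simp only [mem_pi, mem_univ, true_implies, mem_iUnion]
  constructor
  · intro hx
    choose φ hφ using fun v => exists_mem_gridCell hn (hx v)
    exact ⟨φ, hφ⟩
  · rintro ⟨φ, hφ⟩ v
    exact gridCell_subset _ (hφ v)

theorem measureReal_pi_gridCell {V : Type} [Fintype V] {n : ℕ} (φ : V → Fin n) :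
    volume.real (univ.pi fun v => gridCell n (φ v)) = (n : ℝ)⁻¹ ^ Fintype.card V := by
  simp [measureReal_def, volume_pi_pi, volume_gridCell]

theorem homDensity_stepFn {V : Type} [Fintype V] [LinearOrder V] (H : SimpleGraph V)
    [DecidableRel H.Adj] {n : ℕ} (hn : 0 < n) (M : Matrix (Fin n) (Fin n) ℝ) :
    homDensity H (stepFn n M) = graphPoly H M / (n : ℝ) ^ Fintype.card V := by
  set E := Finset.univ.filter fun p : V × V => p.1 < p.2 ∧ H.Adj p.1 p.2
  have hcell : ∀ φ : V → Fin n, MeasurableSet (univ.pi fun v => gridCell n (φ v)) :=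
    fun φ => MeasurableSet.univ_pi fun _ => measurableSet_Ico
  have hconst : ∀ φ : V → Fin n, EqOn (fun x : V → ℝ => ∏ p ∈ E, stepFn n M (x p.1) (x p.2))
      (fun _ => ∏ p ∈ E, M (φ p.1) (φ p.2)) (univ.pi fun v => gridCell n (φ v)) :=
    fun φ x hx => Finset.prod_congr rfl fun p _ =>
      stepFn_of_mem_gridCell M (hx p.1 (mem_univ _)) (hx p.2 (mem_univ _))
  calc homDensity H (stepFn n M)
      = ∫ x in univ.pi fun _ : V => Ico (0 : ℝ) 1, ∏ p ∈ E, stepFn n M (x p.1) (x p.2) :=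
        setIntegral_congr_set Measure.pi_Ico_ae_eq_pi_Icc.symm
    _ = ∑ φ : V → Fin n, ∫ x in univ.pi fun v => gridCell n (φ v),
          ∏ p ∈ E, stepFn n M (x p.1) (x p.2) := by
        rw [pi_Ico_eq_iUnion_pi_gridCell V hn]
        refine integral_iUnion_fintype hcell (fun φ ψ hφψ => ?_) fun φ =>
          (integrableOn_const (by simp [volume_pi_pi, volume_gridCell])).congr_fun
            (hconst φ).symm (hcell φ)
        obtain ⟨v, hv⟩ := Function.ne_iff.1 hφψ
        exact disjoint_univ_pi.2 ⟨v, pairwise_disjoint_gridCell n hv⟩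
    _ = ∑ φ : V → Fin n, (n : ℝ)⁻¹ ^ Fintype.card V * ∏ p ∈ E, M (φ p.1) (φ p.2) := by
        refine Finset.sum_congr rfl fun φ _ => ?_
        rw [setIntegral_congr_fun (hcell φ) (hconst φ), setIntegral_const,
          measureReal_pi_gridCell, smul_eq_mul]
    _ = graphPoly H M / (n : ℝ) ^ Fintype.card V := by
        rw [← Finset.mul_sum, graphPoly, inv_pow, inv_mul_eq_div]

theorem eq_zero_of_stepFn_ae_eq_zero {n : ℕ} {M : Matrix (Fin n) (Fin n) ℝ}
    (h : ∀ᵐ p : ℝ × ℝ ∂(volume.restrict (Icc (0 : ℝ) 1 ×ˢ Icc (0 : ℝ) 1)),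
      stepFn n M p.1 p.2 = 0) : M = 0 := by
  ext i j
  by_contra hij
  have hsub : gridCell n i ×ˢ gridCell n j ⊆
      {p | ¬(p ∈ Icc (0 : ℝ) 1 ×ˢ Icc (0 : ℝ) 1 → stepFn n M p.1 p.2 = 0)} :=
    fun p ⟨hx, hy⟩ hp => hij <| (stepFn_of_mem_gridCell M hx hy).symm.trans <|
      hp ⟨Ico_subset_Icc_self (gridCell_subset i hx), Ico_subset_Icc_self (gridCell_subset j hy)⟩
  rw [ae_restrict_iff' (measurableSet_Icc.prod measurableSet_Icc), ae_iff] at h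
  have hn : n = 0 := by
    simpa [Measure.volume_eq_prod, Measure.prod_prod, volume_gridCell] using
      measure_mono_null hsub h
  exact i.pos.ne' hn

theorem Matrix.isSymm_onesMat (m : ℕ) : (onesMat m).IsSymm :=
  Matrix.IsSymm.ext fun _ _ => rfl

theorem Matrix.isSymm_blockMat (n : ℕ) : (blockMat n).IsSymm :=
  Matrix.IsSymm.ext fun i j => by simp only [blockMat, Matrix.of_apply, iff_comm]

theorem ConvexOn.iteratedDeriv_two_nonneg {f : ℝ → ℝ} (hf : ConvexOn ℝ univ f)
    (hd : Differentiable ℝ f) (x : ℝ) : 0 ≤ iteratedDeriv 2 f x := by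
  rw [iteratedDeriv_succ, iteratedDeriv_one]
  exact (monotoneOn_univ.1 (hf.monotoneOn_deriv fun x _ => hd x)).deriv_nonneg

theorem rpow_abs_graphPoly_smul {V : Type} [Fintype V] [LinearOrder V] (H : SimpleGraph V)
    [DecidableRel H.Adj] (he : edgeCount H ≠ 0) {n : ℕ} {c : ℝ} (hc : 0 ≤ c)
    (M : Matrix (Fin n) (Fin n) ℝ) :
    |graphPoly H (c • M)| ^ (edgeCount H : ℝ)⁻¹ = c * |graphPoly H M| ^ (edgeCount H : ℝ)⁻¹ := by
  rw [graphPoly_smul, abs_mul, abs_pow, abs_of_nonneg hc,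
    Real.mul_rpow (by positivity) (abs_nonneg _), Real.pow_rpow_inv_natCast hc he]

namespace Norming

variable {V : Type} [Fintype V] [LinearOrder V] {H : SimpleGraph V} [DecidableRel H.Adj]
  {n : ℕ} {M N : Matrix (Fin n) (Fin n) ℝ}

theorem eq_zero_of_graphPoly_eq_zero (hH : Norming H) (hn : 0 < n) (hM : M.IsSymm)
    (h : graphPoly H M = 0) : M = 0 :=
  eq_zero_of_stepFn_ae_eq_zero <|
    hH.2 _ (stepFn_isKernel hM) (by rw [homDensity_stepFn H hn, h, zero_div])

theorem rpow_abs_graphPoly_add_le (hH : Norming H) (hn : 0 < n) (hM : M.IsSymm)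
    (hN : N.IsSymm) :
    |graphPoly H (M + N)| ^ (edgeCount H : ℝ)⁻¹ ≤
      |graphPoly H M| ^ (edgeCount H : ℝ)⁻¹ + |graphPoly H N| ^ (edgeCount H : ℝ)⁻¹ := by
  have hc : (0 : ℝ) < (n : ℝ) ^ Fintype.card V := by positivity
  have h := hH.1 _ _ (stepFn_isKernel hM) (stepFn_isKernel hN)
  simp only [← stepFn_add, homDensity_stepFn H hn, abs_div, abs_of_pos hc,
    Real.div_rpow (abs_nonneg _) hc.le, ← add_div] at h
  exact (div_le_div_iff_of_pos_right (by positivity)).1 h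

theorem convexOn_rpow_abs_graphPoly_line (hH : Norming H) (he : edgeCount H ≠ 0) (hn : 0 < n)
    {A B : Matrix (Fin n) (Fin n) ℝ} (hA : A.IsSymm) (hB : B.IsSymm) :
    ConvexOn ℝ univ fun s : ℝ => |graphPoly H (A + s • B)| ^ (edgeCount H : ℝ)⁻¹ := by
  refine ⟨convex_univ, fun x _ y _ a b ha hb hab => ?_⟩
  have hline : A + (a • x + b • y) • B = a • (A + x • B) + b • (A + y • B) := by
    linear_combination (norm := module) (-hab) • A
  simp only [smul_eq_mul] at hline ⊢
  rw [hline, ← rpow_abs_graphPoly_smul H he ha, ← rpow_abs_graphPoly_smul H he hb]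
  exact hH.rpow_abs_graphPoly_add_le hn ((hA.add (hB.smul x)).smul a)
    ((hA.add (hB.smul y)).smul b)

theorem exists_cos_smul_add_sin_smul_eq_zero (hH : Norming H) (hn : 0 < n) (hM : M.IsSymm)
    (hN : N.IsSymm) {a b : ℝ} (hab : a ≤ b)
    (ha : 0 ≤ graphPoly H (Real.cos a • M + Real.sin a • N))
    (hb : graphPoly H (Real.cos b • M + Real.sin b • N) ≤ 0) :
    ∃ θ : ℝ, Real.cos θ • M + Real.sin θ • N = 0 := by
  have hcont : Continuous fun θ : ℝ => graphPoly H (Real.cos θ • M + Real.sin θ • N) :=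
    (continuous_graphPoly H n).comp (by fun_prop)
  obtain ⟨θ, -, hθ⟩ := intermediate_value_Icc' hab hcont.continuousOn ⟨hb, ha⟩
  exact ⟨θ, hH.eq_zero_of_graphPoly_eq_zero hn ((hM.smul _).add (hN.smul _)) hθ⟩

theorem even_edgeCount (hH : Norming H) : Even (edgeCount H) := by
  by_contra hodd
  rw [Nat.not_even_iff_odd] at hodd
  obtain ⟨θ, hθ⟩ := hH.exists_cos_smul_add_sin_smul_eq_zero two_pos (Matrix.isSymm_onesMat 2)
    (Matrix.isSymm_blockMat 1) Real.pi_pos.le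
    (by simp only [Real.cos_zero, Real.sin_zero, one_smul, zero_smul, add_zero,
      graphPoly_onesMat]; positivity)
    (by rw [Real.cos_pi, Real.sin_pi, zero_smul, add_zero, graphPoly_smul, graphPoly_onesMat,
      hodd.neg_one_pow, neg_one_mul, neg_nonpos]; positivity)
  have h00 : Real.cos θ + Real.sin θ = 0 := by
    simpa [onesMat, blockMat] using congrFun₂ hθ 0 0
  have h01 : Real.cos θ - Real.sin θ = 0 := by
    simpa [onesMat, blockMat, sub_eq_add_neg] using congrFun₂ hθ 0 1
  nlinarith [Real.sin_sq_add_cos_sq θ]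

theorem graphPoly_nonneg (hH : Norming H) (hn : 0 < n) (hM : M.IsSymm) : 0 ≤ graphPoly H M := by
  by_contra! hneg
  obtain ⟨θ, hθ⟩ := hH.exists_cos_smul_add_sin_smul_eq_zero hn (Matrix.isSymm_onesMat n) hM
    Real.pi_div_two_pos.le
    (by simp only [Real.cos_zero, Real.sin_zero, one_smul, zero_smul, add_zero,
      graphPoly_onesMat]; positivity)
    (by simpa using hneg.le)
  have h := congrArg (graphPoly H) (eq_neg_of_add_eq_zero_left hθ)
  rw [← neg_smul, graphPoly_smul, graphPoly_smul, graphPoly_onesMat,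
    hH.even_edgeCount.neg_pow] at h
  -- `h : cos θ ^ e * P(J) = sin θ ^ e * P(M)`, with `e` even, `P(J) > 0` and `P(M) < 0`
  have hc : (0 : ℝ) < (n : ℝ) ^ Fintype.card V := by positivity
  have hcos := hH.even_edgeCount.pow_nonneg (Real.cos θ)
  have hsin := hH.even_edgeCount.pow_nonneg (Real.sin θ)
  have hsin0 : Real.sin θ ^ edgeCount H = 0 := by nlinarith [mul_nonneg hcos hc.le]
  have hcos0 : Real.cos θ ^ edgeCount H = 0 := by
    rw [hsin0, zero_mul] at h
    exact (mul_eq_zero.1 h).resolve_right hc.ne'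
  nlinarith [Real.sin_sq_add_cos_sq θ, eq_zero_of_pow_eq_zero hsin0, eq_zero_of_pow_eq_zero hcos0]

theorem convexOn_graphPoly_line (hH : Norming H) (hn : 0 < n) {A B : Matrix (Fin n) (Fin n) ℝ}
    (hA : A.IsSymm) (hB : B.IsSymm) : ConvexOn ℝ univ fun s : ℝ => graphPoly H (A + s • B) := by
  by_cases he : edgeCount H = 0
  · -- with no edges, `graphPoly_smul` at `c = 0` shows that `graphPoly H` is constant
    have hconst : ∀ M : Matrix (Fin n) (Fin n) ℝ, graphPoly H M = graphPoly H 0 := fun M => by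
      simpa [he] using (graphPoly_smul H 0 M).symm
    simpa only [hconst] using convexOn_const _ convex_univ
  · refine ((hH.convexOn_rpow_abs_graphPoly_line he hn hA hB).pow (fun s _ => by positivity)
      (edgeCount H)).congr fun s _ => ?_
    rw [Pi.pow_apply, Real.rpow_inv_natCast_pow (abs_nonneg _) he,
      abs_of_nonneg (hH.graphPoly_nonneg hn (hA.add (hB.smul s)))]

end Norming

theorem norming_hessian_psd {V : Type} [Fintype V] [LinearOrder V]
    (H : SimpleGraph V) [DecidableRel H.Adj] (hH : Norming H) :
    ∀ n : ℕ, 1 ≤ n → ∀ A B : Matrix (Fin n) (Fin n) ℝ, A.IsSymm → B.IsSymm →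
      0 ≤ iteratedDeriv 2 (fun s : ℝ => graphPoly H (A + s • B)) 0 :=
  fun _ hn _ _ hA hB => (hH.convexOn_graphPoly_line hn hA hB).iteratedDeriv_two_nonneg
    (differentiable_graphPoly_line H _ _) 0
end

section
/- Let k > 4 be an integer, let H = C_k^⋈, and define h(x,y) = P_{H,3}(A_{x,y}) where A_{x,y} is the 3×3 symmetric matrix with rows (1, 1, y), (1, 0, 1), (y, 1, x). Then (∂²h/∂x²)(0,0) = 0 and (∂²h/∂x∂y)(0,0) ≥ 1; consequently the 2×2 Hessian matrix [[h_xx(0,0), h_xy(0,0)], [h_xy(0,0), h_yy(0,0)]] is not positive semidefinite. -/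
open MeasureTheory

/-!
Expanding `P_{H,3}` over colourings `φ : V(H) → {0, 1, 2}`, each colouring contributes the monomial
`0 ^ e₁₁ * y ^ e₀₂ * x ^ e₂₂`, where `e_ab` counts the edges whose ends are coloured `a` and `b`.
Hence `h_xx(0,0)` is twice the number of colourings with `e₂₂ = 2` and `e₁₁ = e₀₂ = 0`, and
`h_xy(0,0)` is the number of colourings with `e₂₂ = e₀₂ = 1` and `e₁₁ = 0`.

In `C_k^⋈` with `k ≥ 3` there is no colouring of the first kind. If no edge is coloured `(1,1)` or
`(0,2)`, the neighbours of a vertex of colour `2` have colour `1` or `2`, and no two adjacent vertices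
both have colour `1`. Hence an edge coloured `(2,2)` forces a whole column `{a} × {1,2}` into
colour `2`, and such a column spans three edges coloured `(2,2)`: its own, and one towards each of
the two neighbouring columns. For `k > 4` an explicit colouring of the second kind exists.
Finally `!![0, b; b, c]` has determinant `-b² < 0` for `b ≠ 0`.
-/

open Finset

section Derivatives

variable {𝕜 : Type*} [NontriviallyNormedField 𝕜] {ι : Type*} (s : Finset ι) (c : ι → 𝕜) (m : ι → ℕ)

lemma hasDerivAt_sum_mul_pow (t : 𝕜) :
    HasDerivAt (fun t => ∑ i ∈ s, c i * t ^ m i) (∑ i ∈ s, c i * m i * t ^ (m i - 1)) t :=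
  HasDerivAt.fun_sum fun i _ => by
    simpa [mul_assoc] using (hasDerivAt_pow (m i) t).const_mul (c i)

lemma deriv_sum_mul_pow_zero :
    deriv (fun t => ∑ i ∈ s, c i * t ^ m i) 0 = ∑ i ∈ s with m i = 1, c i := by
  rw [(hasDerivAt_sum_mul_pow s c m 0).deriv, sum_filter]
  refine sum_congr rfl fun i _ => ?_
  rcases m i with _ | _ | n <;> simp

lemma iteratedDeriv_two_sum_mul_pow_zero :
    iteratedDeriv 2 (fun t => ∑ i ∈ s, c i * t ^ m i) 0 = 2 * ∑ i ∈ s with m i = 2, c i := by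
  have hderiv : deriv (fun t => ∑ i ∈ s, c i * t ^ m i) =
      fun t => ∑ i ∈ s, c i * m i * t ^ (m i - 1) :=
    funext fun t => (hasDerivAt_sum_mul_pow s c m t).deriv
  rw [iteratedDeriv_succ, iteratedDeriv_one, hderiv, deriv_sum_mul_pow_zero, mul_sum]
  refine sum_congr (filter_congr fun i _ => by omega) fun i hi => ?_
  rw [(mem_filter.1 hi).2]
  ring

end Derivatives

section ColourCount

variable {V : Type} [Fintype V] (H : SimpleGraph V) [DecidableRel H.Adj] {n : ℕ}

def colourCount (φ : V → Fin n) (c : Sym2 (Fin n)) : ℕ :=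
  #{e ∈ H.edgeFinset | e.map φ = c}

variable {H} {φ : V → Fin n}

lemma mk_mem_filter_map_edgeFinset {c : Sym2 (Fin n)} {u v : V} :
    s(u, v) ∈ {e ∈ H.edgeFinset | e.map φ = c} ↔ H.Adj u v ∧ s(φ u, φ v) = c := by
  simp

lemma colourCount_eq_zero_iff {c : Sym2 (Fin n)} :
    colourCount H φ c = 0 ↔ ∀ u v, H.Adj u v → s(φ u, φ v) ≠ c := by
  simp [colourCount, filter_eq_empty_iff, Sym2.forall]

lemma colourCount_eq_one_of_forall_iff [DecidableEq V] {c : Sym2 (Fin n)} {u v : V}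
    (h : ∀ u' v', H.Adj u' v' ∧ s(φ u', φ v') = c ↔ s(u', v') = s(u, v)) :
    colourCount H φ c = 1 := by
  rw [colourCount, card_eq_one]
  refine ⟨s(u, v), ?_⟩
  ext e
  induction e using Sym2.ind with
  | h u' v' => rw [mk_mem_filter_map_edgeFinset, mem_singleton, h]

end ColourCount

section GraphPoly

variable {V : Type} [Fintype V] [LinearOrder V] (H : SimpleGraph V) [DecidableRel H.Adj]

lemma prod_lt_adj_eq_prod_edgeFinset {M : Type*} [CommMonoid M] (f : Sym2 V → M) :
    ∏ p ∈ univ.filter (fun p : V × V => p.1 < p.2 ∧ H.Adj p.1 p.2), f s(p.1, p.2) =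
      ∏ e ∈ H.edgeFinset, f e := by
  rw [← prod_image]
  · congr 1
    ext e
    induction e using Sym2.ind with
    | h u v =>
      simp only [mem_image, mem_filter, mem_univ, true_and, Prod.exists, SimpleGraph.mem_edgeFinset,
        SimpleGraph.mem_edgeSet]
      constructor
      · rintro ⟨a, b, ⟨-, hab⟩, he⟩
        rw [← SimpleGraph.mem_edgeSet, ← he]
        exact hab
      · intro huv
        rcases lt_or_gt_of_ne huv.ne with h | h
        · exact ⟨u, v, ⟨h, huv⟩, rfl⟩
        · exact ⟨v, u, ⟨h, huv.symm⟩, Sym2.eq_swap⟩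
  · rintro ⟨a, b⟩ hab ⟨c, d⟩ hcd he
    simp only [coe_filter, mem_univ, true_and, Set.mem_ofPred_eq] at hab hcd
    rcases Sym2.eq_iff.1 he with ⟨rfl, rfl⟩ | ⟨rfl, rfl⟩
    · rfl
    · exact absurd hab.1 hcd.1.asymm

lemma graphPoly_eq_sum_colourCount (x y : ℝ) :
    graphPoly H !![(1:ℝ), 1, y; 1, 0, 1; y, 1, x] =
      ∑ φ : V → Fin 3, 0 ^ colourCount H φ s(1, 1) * y ^ colourCount H φ s(0, 2) *
        x ^ colourCount H φ s(2, 2) := by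
  set w : Sym2 (Fin 3) → ℝ := fun c =>
    (if c = s(1, 1) then 0 else 1) * (if c = s(2, 2) then x else 1) * (if c = s(0, 2) then y else 1)
  have hentry (a b : Fin 3) : !![(1:ℝ), 1, y; 1, 0, 1; y, 1, x] a b = w s(a, b) := by
    fin_cases a <;> fin_cases b <;> simp [w]
  refine sum_congr rfl fun φ _ => ?_
  calc _ = ∏ p ∈ univ.filter (fun p : V × V => p.1 < p.2 ∧ H.Adj p.1 p.2), w (s(p.1, p.2).map φ) :=
        prod_congr rfl fun p _ => by rw [Sym2.map_mk, hentry]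
    _ = ∏ e ∈ H.edgeFinset, w (e.map φ) := prod_lt_adj_eq_prod_edgeFinset H (fun e => w (e.map φ))
    _ = _ := by
      simp only [w, prod_mul_distrib, prod_ite, prod_const, one_pow, mul_one, colourCount]
      ring

end GraphPoly

lemma eq_one_of_adj_of_eq_two {V : Type} {H : SimpleGraph V} {φ : V → Fin 3}
    (h02 : ∀ u v, H.Adj u v → s(φ u, φ v) ≠ s(0, 2)) {u v : V} (huv : H.Adj u v)
    (hu : φ u = 2) (hv : φ v ≠ 2) : φ v = 1 := by
  have h := h02 u v huv
  rw [hu] at h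
  generalize φ v = c at h hv
  fin_cases c <;> simp_all [Sym2.eq_swap]

lemma forall_fin_two_of_ne {α : Type*} {f : Fin 2 → α} {i j : Fin 2} {x : α} (hij : i ≠ j)
    (hi : f i = x) (hj : f j = x) : ∀ l, f l = x := by
  intro l
  fin_cases i <;> fin_cases j <;> fin_cases l <;> simp_all

lemma add_one_mod_eq_iff {a b k : ℕ} (ha : a < k) (hb : b < k) :
    (a + 1) % k = b ↔ a + 1 = b ∨ a + 1 = k ∧ b = 0 := by
  rcases Nat.lt_or_ge (a + 1) k with h | h
  · rw [Nat.mod_eq_of_lt h]; omega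
  · rw [show a + 1 = k by omega, Nat.mod_self]; omega

namespace CycleBowtie

open Fin.CommRing

variable {k : ℕ}

lemma adj_iff [NeZero k] {a b : Fin k} {i j : Fin 2} :
    (cycleBowtie k).Adj (a, i) (b, j) ↔ i ≠ j ∧ (a = b ∨ a + 1 = b ∨ b + 1 = a) := by
  simp only [cycleBowtie, Fin.ext_iff, Fin.val_add, Fin.val_one', Nat.add_mod_mod]

section ColourTwo

variable [NeZero k] {φ : Fin k × Fin 2 → Fin 3}
  (h11 : ∀ u v, (cycleBowtie k).Adj u v → s(φ u, φ v) ≠ s(1, 1))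
  (h02 : ∀ u v, (cycleBowtie k).Adj u v → s(φ u, φ v) ≠ s(0, 2))
include h11 h02

lemma exists_mem_of_column_eq_two {a b : Fin k} (hcol : ∀ i, φ (a, i) = 2)
    (hab : a + 1 = b ∨ b + 1 = a) :
    ∃ i j, s((a, i), (b, j)) ∈ {e ∈ (cycleBowtie k).edgeFinset | e.map φ = s(2, 2)} := by
  have hadj {i j : Fin 2} (hij : i ≠ j) : (cycleBowtie k).Adj (a, i) (b, j) :=
    adj_iff.2 ⟨hij, Or.inr hab⟩
  simp only [mk_mem_filter_map_edgeFinset, hcol, Sym2.eq_iff, true_and, or_self]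
  by_cases h0 : φ (b, 0) = 2
  · exact ⟨1, 0, hadj (by decide), h0⟩
  by_cases h1 : φ (b, 1) = 2
  · exact ⟨0, 1, hadj (by decide), h1⟩
  have hb0 := eq_one_of_adj_of_eq_two h02 (hadj (by decide : (1 : Fin 2) ≠ 0)) (hcol 1) h0
  have hb1 := eq_one_of_adj_of_eq_two h02 (hadj (by decide : (0 : Fin 2) ≠ 1)) (hcol 0) h1
  exact absurd (by rw [hb0, hb1]) (h11 (b, 0) (b, 1) (adj_iff.2 ⟨by decide, Or.inl rfl⟩))

lemma two_lt_colourCount_of_column_eq_two (hk : 2 < k) {a : Fin k} (hcol : ∀ i, φ (a, i) = 2) :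
    2 < colourCount (cycleBowtie k) φ s(2, 2) := by
  obtain ⟨i, j, hnext⟩ := exists_mem_of_column_eq_two h11 h02 hcol (Or.inl rfl)
  obtain ⟨i', j', hprev⟩ :=
    exists_mem_of_column_eq_two h11 h02 hcol (b := a - 1) (Or.inr (sub_add_cancel a 1))
  have hvert : s((a, 0), (a, 1)) ∈ {e ∈ (cycleBowtie k).edgeFinset | e.map φ = s(2, 2)} := by
    simp [hcol, adj_iff]
  have h1 : (1 : Fin k) ≠ 0 := by simp [Fin.ext_iff, Nat.mod_eq_of_lt (by omega : 1 < k)]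
  have h2 : (2 : Fin k) ≠ 0 := by simp [Fin.ext_iff, Nat.mod_eq_of_lt hk]
  have hnext_ne : a ≠ a + 1 := fun h => h1 (by linear_combination -h)
  have hprev_ne : a ≠ a - 1 := fun h => h1 (by linear_combination h)
  have hnext_ne_prev : a + 1 ≠ a - 1 := fun h => h2 (by linear_combination h)
  have hne {e e' : Sym2 (Fin k × Fin 2)} (h : e.map Prod.fst ≠ e'.map Prod.fst) : e ≠ e' :=
    fun he => h (congrArg _ he)
  refine two_lt_card.2 ⟨_, hvert, _, hnext, _, hprev, hne ?_, hne ?_, hne ?_⟩ <;>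
    simp [hnext_ne, hprev_ne, hnext_ne_prev]

lemma two_lt_colourCount_of_diagonal (hk : 2 < k) {a b : Fin k} (hab : a + 1 = b) {i j : Fin 2}
    (hij : i ≠ j) (hi : φ (a, i) = 2) (hj : φ (b, j) = 2) :
    2 < colourCount (cycleBowtie k) φ s(2, 2) := by
  by_cases haj : φ (a, j) = 2
  · exact two_lt_colourCount_of_column_eq_two h11 h02 hk (forall_fin_two_of_ne hij hi haj)
  by_cases hbi : φ (b, i) = 2
  · exact two_lt_colourCount_of_column_eq_two h11 h02 hk (forall_fin_two_of_ne hij hbi hj)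
  have haj' := eq_one_of_adj_of_eq_two h02 (adj_iff.2 ⟨hij, Or.inl rfl⟩) hi haj
  have hbi' := eq_one_of_adj_of_eq_two h02 (adj_iff.2 ⟨hij.symm, Or.inl rfl⟩) hj hbi
  exact absurd (by rw [haj', hbi']) (h11 _ _ (adj_iff.2 ⟨hij.symm, Or.inr (Or.inl hab)⟩))

end ColourTwo

theorem colourCount_two_two_ne_two (hk : 2 < k) {φ : Fin k × Fin 2 → Fin 3}
    (h11 : colourCount (cycleBowtie k) φ s(1, 1) = 0)
    (h02 : colourCount (cycleBowtie k) φ s(0, 2) = 0) :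
    colourCount (cycleBowtie k) φ s(2, 2) ≠ 2 := by
  have : NeZero k := ⟨by omega⟩
  rw [colourCount_eq_zero_iff] at h11 h02
  intro h22
  suffices 2 < colourCount (cycleBowtie k) φ s(2, 2) by omega
  obtain ⟨e, he⟩ : {e ∈ (cycleBowtie k).edgeFinset | e.map φ = s(2, 2)}.Nonempty :=
    card_pos.1 (by rw [← colourCount, h22]; omega)
  induction e using Sym2.ind with
  | h u v =>
    obtain ⟨a, i⟩ := u
    obtain ⟨b, j⟩ := v
    rw [mk_mem_filter_map_edgeFinset, adj_iff] at he
    obtain ⟨⟨hij, hab⟩, hφ⟩ := he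
    obtain ⟨hi, hj⟩ : φ (a, i) = 2 ∧ φ (b, j) = 2 := by simpa [Sym2.eq_iff] using hφ
    rcases hab with rfl | hab | hab
    · exact two_lt_colourCount_of_column_eq_two h11 h02 hk (forall_fin_two_of_ne hij hi hj)
    · exact two_lt_colourCount_of_diagonal h11 h02 hk hab hij hi hj
    · exact two_lt_colourCount_of_diagonal h11 h02 hk hab hij.symm hj hi

lemma adj_iff_val {a b : Fin k} {i j : Fin 2} :
    (cycleBowtie k).Adj (a, i) (b, j) ↔ i ≠ j ∧ ((a : ℕ) = b ∨ (a : ℕ) + 1 = b ∨ (b : ℕ) + 1 = a ∨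
      ((a : ℕ) + 1 = k ∧ (b : ℕ) = 0) ∨ ((b : ℕ) + 1 = k ∧ (a : ℕ) = 0)) := by
  simp only [cycleBowtie, Fin.ext_iff, add_one_mod_eq_iff a.isLt b.isLt,
    add_one_mod_eq_iff b.isLt a.isLt]
  omega

/-- The class of colour `2` is the edge `(0,0) ~ (1,1)`; all neighbours of it except `(1,0)` get
colour `1`, and for `k > 4` these three vertices are pairwise non-adjacent. -/
def witness (k : ℕ) (p : Fin k × Fin 2) : Fin 3 :=
  if p.2 = 0 then (if (p.1 : ℕ) = 0 then 2 else if (p.1 : ℕ) = 2 then 1 else 0)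
  else if (p.1 : ℕ) = 1 then 2 else if (p.1 : ℕ) = 0 ∨ (p.1 : ℕ) + 1 = k then 1 else 0

section Witness

variable (hk : 4 < k)
include hk

lemma colourCount_witness_one_one : colourCount (cycleBowtie k) (witness k) s(1, 1) = 0 := by
  rw [colourCount_eq_zero_iff]
  rintro ⟨⟨a, ha⟩, i⟩ ⟨⟨b, hb⟩, j⟩ hadj
  rw [adj_iff_val] at hadj
  fin_cases i <;> fin_cases j <;> simp [witness] at hadj ⊢ <;> split_ifs <;> omega

lemma colourCount_witness_two_two : colourCount (cycleBowtie k) (witness k) s(2, 2) = 1 := by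
  refine colourCount_eq_one_of_forall_iff (u := (⟨0, by omega⟩, 0)) (v := (⟨1, by omega⟩, 1)) ?_
  rintro ⟨⟨a, ha⟩, i⟩ ⟨⟨b, hb⟩, j⟩
  rw [adj_iff_val]
  fin_cases i <;> fin_cases j <;> simp [witness] <;> split_ifs <;> omega

lemma colourCount_witness_zero_two : colourCount (cycleBowtie k) (witness k) s(0, 2) = 1 := by
  refine colourCount_eq_one_of_forall_iff (u := (⟨1, by omega⟩, 0)) (v := (⟨1, by omega⟩, 1)) ?_
  rintro ⟨⟨a, ha⟩, i⟩ ⟨⟨b, hb⟩, j⟩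
  rw [adj_iff_val]
  fin_cases i <;> fin_cases j <;> simp [witness] <;> split_ifs <;> omega

end Witness

theorem iteratedDeriv_two_graphPoly_eq_zero (hk : 2 < k) :
    iteratedDeriv 2
      (fun x : ℝ => graphPoly (cycleBowtie k) !![(1:ℝ), 1, 0; 1, 0, 1; 0, 1, x]) 0 = 0 := by
  simp only [graphPoly_eq_sum_colourCount, iteratedDeriv_two_sum_mul_pow_zero]
  refine mul_eq_zero_of_right _ (sum_eq_zero fun φ hφ => ?_)
  by_cases h11 : colourCount (cycleBowtie k) φ s(1, 1) = 0
  · have h02 : colourCount (cycleBowtie k) φ s(0, 2) ≠ 0 := fun h02 =>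
      colourCount_two_two_ne_two hk h11 h02 (mem_filter.1 hφ).2
    simp [h02]
  · simp [h11]

theorem one_le_deriv_deriv_graphPoly (hk : 4 < k) :
    1 ≤ deriv (fun y : ℝ => deriv
      (fun x : ℝ => graphPoly (cycleBowtie k) !![(1:ℝ), 1, y; 1, 0, 1; y, 1, x]) 0) 0 := by
  simp only [graphPoly_eq_sum_colourCount, deriv_sum_mul_pow_zero]
  calc (1 : ℝ) = 0 ^ colourCount (cycleBowtie k) (witness k) s(1, 1) := by
        rw [colourCount_witness_one_one hk, pow_zero]
    _ ≤ _ := single_le_sum (f := fun φ => (0 : ℝ) ^ colourCount (cycleBowtie k) φ s(1, 1))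
        (fun φ _ => pow_nonneg le_rfl _)
        (by simpa using ⟨colourCount_witness_two_two hk, colourCount_witness_zero_two hk⟩)

end CycleBowtie

theorem cycleBowtie_hessian_not_psd (k : ℕ) (hk : 4 < k) :
    iteratedDeriv 2
        (fun x : ℝ => graphPoly (cycleBowtie k) !![(1:ℝ), 1, 0; 1, 0, 1; 0, 1, x]) 0 = 0 ∧
    1 ≤ deriv (fun y : ℝ => deriv
        (fun x : ℝ => graphPoly (cycleBowtie k) !![(1:ℝ), 1, y; 1, 0, 1; y, 1, x]) 0) 0 ∧
    ¬ Matrix.PosSemidef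
      !![iteratedDeriv 2
            (fun x : ℝ => graphPoly (cycleBowtie k) !![(1:ℝ), 1, 0; 1, 0, 1; 0, 1, x]) 0,
          deriv (fun y : ℝ => deriv
            (fun x : ℝ => graphPoly (cycleBowtie k) !![(1:ℝ), 1, y; 1, 0, 1; y, 1, x]) 0) 0;
          deriv (fun y : ℝ => deriv
            (fun x : ℝ => graphPoly (cycleBowtie k) !![(1:ℝ), 1, y; 1, 0, 1; y, 1, x]) 0) 0,
          iteratedDeriv 2
            (fun y : ℝ => graphPoly (cycleBowtie k) !![(1:ℝ), 1, y; 1, 0, 1; y, 1, 0]) 0] := by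
  have hxx := CycleBowtie.iteratedDeriv_two_graphPoly_eq_zero (k := k) (by omega)
  have hxy := CycleBowtie.one_le_deriv_deriv_graphPoly hk
  refine ⟨hxx, hxy, fun hpsd => ?_⟩
  have hdet := hpsd.det_nonneg
  rw [hxx, Matrix.det_fin_two_of] at hdet
  nlinarith
end
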